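/- arXiv:0903.4793 — 10 statements merged into one kernel-verified Lean document; each statement's English description precedes it below -/
import Mathlib

section
/- Let G be an infinite, connected, locally finite simple graph and let p ≥ 2 be a natural number such that every vertex of G has degree at most p. Then the physical Cheeger constant of G satisfies α(G) ≤ p − 2; that is, the infimum over all finite nonempty vertex sets W of |∂_E W|/|W| is at most p − 2. -/
def edgeBdry {V : Type*} (G : SimpleGraph V) (W : Set V) : Set (Sym2 V) :=
  {e | e ∈ G.edgeSet ∧ ∃ v w : V, e = s(v, w) ∧ v ∈ W ∧ w ∉ W}

/-!
Summing degrees over a finite set `W` counts each edge inside `W` twice and each boundary edge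
once, so `|∂W| ≤ p |W| - 2 |E(W)|`. Since `G` is connected and infinite, `W` can be grown one
adjacent vertex at a time, which keeps `|E(W)| ≥ |W| - 1`; hence `|∂W| / |W| ≤ p - 2 + 2 / |W|`
with `|W|` as large as we like.
-/

open Finset Filter

namespace SimpleGraph

variable {V : Type*} (G : SimpleGraph V) [G.LocallyFinite] [DecidableEq V]

theorem mem_sigma_neighborFinset_sdiff {W : Finset V} {x : Σ _ : V, V} :
    x ∈ W.sigma (fun v => G.neighborFinset v \ W) ↔
      x.1 ∈ W ∧ G.Adj x.1 x.2 ∧ x.2 ∉ W := by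
  rw [mem_sigma, Finset.mem_sdiff, mem_neighborFinset]

theorem edgeBdry_eq_image_sigma (W : Finset V) :
    edgeBdry G W = ↑((W.sigma fun v => G.neighborFinset v \ W).image
      fun x => s(x.1, x.2)) := by
  ext e
  simp only [coe_image, Set.mem_image, mem_coe, mem_sigma_neighborFinset_sdiff, Sigma.exists]
  constructor
  · rintro ⟨he, v, w, rfl, hv, hw⟩
    exact ⟨v, w, ⟨hv, he, hw⟩, rfl⟩
  · rintro ⟨v, w, ⟨hv, hadj, hw⟩, rfl⟩
    exact ⟨hadj, v, w, rfl, hv, hw⟩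

theorem ncard_edgeBdry_eq_sum_card_sdiff (W : Finset V) :
    (edgeBdry G W).ncard = ∑ v ∈ W, #(G.neighborFinset v \ W) := by
  rw [edgeBdry_eq_image_sigma, Set.ncard_coe_finset, card_image_of_injOn, card_sigma]
  rintro ⟨a, b⟩ hab ⟨c, d⟩ hcd h
  rw [mem_coe, mem_sigma_neighborFinset_sdiff] at hab hcd
  rcases Sym2.eq_iff.mp h with ⟨rfl, rfl⟩ | ⟨rfl, rfl⟩
  · rfl
  · exact absurd hab.1 hcd.2.2

theorem ncard_edgeBdry_add_sum_card_inter (W : Finset V) :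
    (edgeBdry G W).ncard + ∑ v ∈ W, #(G.neighborFinset v ∩ W) = ∑ v ∈ W, G.degree v := by
  simp only [ncard_edgeBdry_eq_sum_card_sdiff, ← sum_add_distrib,
    ← card_neighborFinset_eq_degree, add_comm #(_ \ W), card_inter_add_card_sdiff]

theorem sum_card_neighborFinset_inter_add_two_le_insert {W : Finset V} {u w : V} (hu : u ∈ W)
    (hw : w ∉ W) (huw : G.Adj u w) :
    ∑ v ∈ W, #(G.neighborFinset v ∩ W) + 2 ≤
      ∑ v ∈ insert w W, #(G.neighborFinset v ∩ insert w W) := by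
  have hmono : ∀ v ∈ W, #(G.neighborFinset v ∩ W) ≤ #(G.neighborFinset v ∩ insert w W) :=
    fun v _ => card_le_card (inter_subset_inter_left (subset_insert w W))
  have hgrow : #(G.neighborFinset u ∩ W) < #(G.neighborFinset u ∩ insert w W) := by
    exact card_lt_card ((ssubset_iff_of_subset (inter_subset_inter_left (subset_insert w W))).mpr
      ⟨w, by simp [huw], by simp [hw]⟩)
  have hw_pos : 0 < #(G.neighborFinset w ∩ insert w W) :=
    card_pos.mpr ⟨u, by simp [huw.symm, hu]⟩
  rw [sum_insert hw]
  have := sum_lt_sum hmono ⟨u, hu, hgrow⟩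
  omega

theorem exists_card_eq_two_mul_le_sum_card_inter [Infinite V] (hG : G.Connected) (n : ℕ) :
    ∃ W : Finset V, #W = n + 1 ∧ 2 * n ≤ ∑ v ∈ W, #(G.neighborFinset v ∩ W) := by
  induction n with
  | zero =>
    obtain ⟨v⟩ := hG.nonempty
    exact ⟨{v}, card_singleton v, Nat.zero_le _⟩
  | succ n ih =>
    obtain ⟨W, hcard, hsum⟩ := ih
    obtain ⟨a, ha⟩ : W.Nonempty := card_pos.mp (by omega)
    obtain ⟨b, hb⟩ := W.exists_notMem
    obtain ⟨d, -, hu, hw⟩ := ((hG a b).some).exists_boundary_dart W ha hb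
    refine ⟨insert d.snd W, by rw [card_insert_of_notMem hw, hcard], ?_⟩
    have := G.sum_card_neighborFinset_inter_add_two_le_insert hu hw d.adj
    omega

theorem exists_ncard_edgeBdry_add_le [Infinite V] (hG : G.Connected) {p : ℕ}
    (hdeg : ∀ v, G.degree v ≤ p) (n : ℕ) :
    ∃ W : Finset V, #W = n + 1 ∧ (edgeBdry G W).ncard + 2 * n ≤ p * (n + 1) := by
  obtain ⟨W, hcard, hsum⟩ := G.exists_card_eq_two_mul_le_sum_card_inter hG n
  refine ⟨W, hcard, ?_⟩
  have hdegsum : ∑ v ∈ W, G.degree v ≤ p * #W := by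
    simpa [mul_comm] using sum_le_sum fun v (_ : v ∈ W) => hdeg v
  have := G.ncard_edgeBdry_add_sum_card_inter W
  rw [hcard] at hdegsum
  omega

theorem exists_ncard_edgeBdry_div_card_le [Infinite V] (hG : G.Connected) {p : ℕ}
    (hdeg : ∀ v, G.degree v ≤ p) (n : ℕ) :
    ∃ W : Finset V, W.Nonempty ∧
      ((edgeBdry G W).ncard : ℝ) / #W ≤ p - 2 + 2 / ((n : ℝ) + 1) := by
  obtain ⟨W, hcard, hbound⟩ := G.exists_ncard_edgeBdry_add_le hG hdeg n
  refine ⟨W, card_pos.mp (by omega), ?_⟩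
  have hbound' : ((edgeBdry G W).ncard : ℝ) + 2 * n ≤ p * (n + 1) := by exact_mod_cast hbound
  have hn : (0 : ℝ) < n + 1 := by positivity
  rw [hcard, Nat.cast_add_one, div_le_iff₀ hn, add_mul, div_mul_cancel₀ _ hn.ne']
  linarith

end SimpleGraph

open SimpleGraph in
theorem cheeger_le_of_degree_le_general {V : Type*} [Infinite V] (G : SimpleGraph V)
    (hconn : G.Connected)
    (p : ℕ) (hdeg : ∀ v : V, (G.neighborSet v).encard ≤ p) :
    sInf {r : ℝ | ∃ W : Finset V, W.Nonempty ∧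
        r = ((edgeBdry G (W : Set V)).ncard : ℝ) / (W.card : ℝ)} ≤ (p : ℝ) - 2 := by
  classical
  let : G.LocallyFinite := fun v => (Set.finite_of_encard_le_coe (hdeg v)).fintype
  have hdeg' : ∀ v, G.degree v ≤ p := fun v => by
    simpa [← coe_neighborFinset, Set.encard_coe_eq_coe_finsetCard] using hdeg v
  have hlim :
      Tendsto (fun n : ℕ => (p : ℝ) - 2 + 2 / ((n : ℝ) + 1)) atTop (nhds ((p : ℝ) - 2)) := by
    simpa [div_eq_mul_inv] using
      (tendsto_one_div_add_atTop_nhds_zero_nat.const_mul 2).const_add ((p : ℝ) - 2)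
  refine ge_of_tendsto' hlim fun n => ?_
  obtain ⟨W, hW, hle⟩ := G.exists_ncard_edgeBdry_div_card_le hconn hdeg' n
  refine le_trans (csInf_le ?_ ⟨W, hW, rfl⟩) hle
  exact ⟨0, by rintro r ⟨W, -, rfl⟩; positivity⟩

/-- an infinite, connected, locally finite simple graph with all vertex degrees
at most `p` (`p ≥ 2`) has physical Cheeger constant at most `p - 2`. -/
theorem cheeger_le_of_degree_le {V : Type*} [Infinite V] (G : SimpleGraph V)
    (hconn : G.Connected) (hlf : ∀ v : V, (G.neighborSet v).Finite)
    (p : ℕ) (hp : 2 ≤ p) (hdeg : ∀ v : V, (G.neighborSet v).encard ≤ p) :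
    sInf {r : ℝ | ∃ W : Finset V, W.Nonempty ∧
        r = ((edgeBdry G (W : Set V)).ncard : ℝ) / (W.card : ℝ)} ≤ (p : ℝ) - 2 :=
  cheeger_le_of_degree_le_general G hconn p hdeg
end

section
/- Let q ≥ 3 be an integer, N = (q−2)/2 if q is even and N = q−2 if q is odd, and let τ : {0,…,N} → {1,…,q−1} be defined by τ(k) = q−1−2k if q is even; and if q is odd, τ(k) = q−1−2k for 0 ≤ k ≤ (N−1)/2 and τ(k) = 2q−3−2k for (N+1)/2 ≤ k ≤ N. Let σ : ℕ → ℤ and let c_n^j (n ≥ 0, 1 ≤ j ≤ q−1) be integers satisfying: c_0^j = 0 for 1 ≤ j ≤ q−2 and c_0^{q−1} = σ_1; and for all n ≥ 1: c_n^l = c_{n−1}^{l+2} for 1 ≤ l ≤ q−3, c_n^{q−2} = c_{n−1}^2, and c_n^{q−1} = c_n^1 + σ_{n+1} − σ_n. Then for every n with 1 ≤ n ≤ N: c_n^{τ(l)} = σ_{n+1−l} − σ_{n−l} for 1 ≤ l ≤ n−1; c_n^{τ(n)} = σ_1; and c_n^{τ(l)} = 0 for n+1 ≤ l ≤ N. Moreover,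 if q is even, then c_n^{2l} = 0 for 1 ≤ l ≤ N and 1 ≤ n ≤ N. -/
/-!
Both recurrences move a face count from index `j` at radius `n` to index `j + 2` at radius `n - 1`
(with `q - 2` wrapping round to `2`), and `τ` lists exactly this orbit backwards:
`τ (l - 1)` is the successor of `τ l`, from `τ N = 1` up to `τ 0 = q - 1`. Hence `c n (τ l)` is
constant along diagonals and equals `c (n - l) (q - 1)` for `l ≤ n`, and a value
`c 0 (τ (l - n)) = 0` of the initial data for `l > n`. The third recurrence together with
`c m 1 = c m (τ N) = 0` for `m < N` gives `c m (q - 1) = σ (m + 1) - σ m`. For even `q` the even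
indices form an orbit of their own, on which the initial data vanish.
-/

namespace FaceCount

def tauLength (q : ℕ) : ℕ := if Even q then (q - 2) / 2 else q - 2

def tauFormula (q N k : ℕ) : ℕ :=
  if Even q ∨ k ≤ (N - 1) / 2 then q - 1 - 2 * k else 2 * q - 3 - 2 * k

theorem diag_shift_iterate {c : ℕ → ℕ → ℤ} {t : ℕ → ℕ} {N : ℕ}
    (hshift : ∀ m l, 1 ≤ m → 1 ≤ l → l ≤ N → c m (t l) = c (m - 1) (t (l - 1)))
    {m l k : ℕ} (hkm : k ≤ m) (hkl : k ≤ l) (hl : l ≤ N) :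
    c m (t l) = c (m - k) (t (l - k)) := by
  induction k with
  | zero => rfl
  | succ k ih =>
    rw [ih (by omega) (by omega), hshift _ _ (by omega) (by omega) (by omega), Nat.sub_sub,
      Nat.sub_sub]

section Tau

variable {q N : ℕ} {τ : ℕ → ℕ}

theorem tau_cases (hN : N = tauLength q) (hτ : ∀ k ≤ N, τ k = tauFormula q N k)
    {k : ℕ} (hk : k ≤ N) :
    (q % 2 = 0 ∧ N = (q - 2) / 2 ∧ τ k = q - 1 - 2 * k) ∨
    (q % 2 = 1 ∧ N = q - 2 ∧ k ≤ (N - 1) / 2 ∧ τ k = q - 1 - 2 * k) ∨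
    (q % 2 = 1 ∧ N = q - 2 ∧ (N - 1) / 2 < k ∧ τ k = 2 * q - 3 - 2 * k) := by
  rw [tauLength] at hN
  subst hN
  rw [hτ k hk, tauFormula]
  split_ifs <;> simp_all [Nat.even_iff]

theorem tau_zero (hN : N = tauLength q) (hτ : ∀ k ≤ N, τ k = tauFormula q N k) :
    τ 0 = q - 1 := by
  rcases tau_cases hN hτ (Nat.zero_le N) with h | h | h <;> omega

theorem tau_last (hN : N = tauLength q) (hτ : ∀ k ≤ N, τ k = tauFormula q N k)
    (hN1 : 1 ≤ N) : τ N = 1 := by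
  rcases tau_cases hN hτ le_rfl with h | h | h <;> omega

theorem tau_mem (hN : N = tauLength q) (hτ : ∀ k ≤ N, τ k = tauFormula q N k)
    {l : ℕ} (hl : 1 ≤ l) (hlN : l ≤ N) : 1 ≤ τ l ∧ τ l ≤ q - 2 := by
  rcases tau_cases hN hτ hlN with h | h | h <;> omega

theorem tau_pred_cases (hN : N = tauLength q) (hτ : ∀ k ≤ N, τ k = tauFormula q N k)
    {l : ℕ} (hl : 1 ≤ l) (hlN : l ≤ N) :
    (1 ≤ τ l ∧ τ l ≤ q - 3 ∧ τ (l - 1) = τ l + 2) ∨ (τ l = q - 2 ∧ τ (l - 1) = 2) := by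
  rcases tau_cases hN hτ hlN with h | h | h <;>
    rcases tau_cases hN hτ (k := l - 1) (by omega) with h' | h' | h' <;> omega

end Tau

section FaceCounts

variable {q N : ℕ} {τ : ℕ → ℕ} {σ : ℕ → ℤ} {c : ℕ → ℕ → ℤ}

theorem c_tau_diag (hN : N = tauLength q) (hτ : ∀ k ≤ N, τ k = tauFormula q N k)
    (hrec1 : ∀ n, 1 ≤ n → ∀ l, 1 ≤ l → l ≤ q - 3 → c n l = c (n - 1) (l + 2))
    (hrec2 : ∀ n, 1 ≤ n → c n (q - 2) = c (n - 1) 2)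
    {m l k : ℕ} (hkm : k ≤ m) (hkl : k ≤ l) (hlN : l ≤ N) :
    c m (τ l) = c (m - k) (τ (l - k)) := by
  refine diag_shift_iterate (fun m l hm hl hlN => ?_) hkm hkl hlN
  rcases tau_pred_cases hN hτ hl hlN with ⟨h1, h3, hpred⟩ | ⟨hl2, hpred⟩
  · rw [hrec1 m hm _ h1 h3, hpred]
  · rw [hl2, hrec2 m hm, hpred]

theorem c_tau_eq_zero_of_lt (hN : N = tauLength q) (hτ : ∀ k ≤ N, τ k = tauFormula q N k)
    (hc0 : ∀ j, 1 ≤ j → j ≤ q - 2 → c 0 j = 0)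
    (hrec1 : ∀ n, 1 ≤ n → ∀ l, 1 ≤ l → l ≤ q - 3 → c n l = c (n - 1) (l + 2))
    (hrec2 : ∀ n, 1 ≤ n → c n (q - 2) = c (n - 1) 2)
    {m l : ℕ} (hml : m < l) (hlN : l ≤ N) : c m (τ l) = 0 := by
  rw [c_tau_diag hN hτ hrec1 hrec2 le_rfl hml.le hlN, Nat.sub_self]
  obtain ⟨h1, h2⟩ := tau_mem hN hτ (l := l - m) (by omega) (by omega)
  exact hc0 _ h1 h2

theorem c_q_sub_one_eq (hN : N = tauLength q) (hτ : ∀ k ≤ N, τ k = tauFormula q N k)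
    (hc0 : ∀ j, 1 ≤ j → j ≤ q - 2 → c 0 j = 0)
    (hrec1 : ∀ n, 1 ≤ n → ∀ l, 1 ≤ l → l ≤ q - 3 → c n l = c (n - 1) (l + 2))
    (hrec2 : ∀ n, 1 ≤ n → c n (q - 2) = c (n - 1) 2)
    (hrec3 : ∀ n, 1 ≤ n → c n (q - 1) = c n 1 + σ (n + 1) - σ n)
    {m : ℕ} (hm : 1 ≤ m) (hmN : m < N) : c m (q - 1) = σ (m + 1) - σ m := by
  have hc1 : c m 1 = 0 := by
    rw [← tau_last hN hτ (by omega)]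
    exact c_tau_eq_zero_of_lt hN hτ hc0 hrec1 hrec2 hmN le_rfl
  rw [hrec3 m hm, hc1, zero_add]

theorem c_even_eq_zero (hN : N = tauLength q) (he : Even q)
    (hc0 : ∀ j, 1 ≤ j → j ≤ q - 2 → c 0 j = 0)
    (hrec1 : ∀ n, 1 ≤ n → ∀ l, 1 ≤ l → l ≤ q - 3 → c n l = c (n - 1) (l + 2))
    (hrec2 : ∀ n, 1 ≤ n → c n (q - 2) = c (n - 1) 2)
    (m : ℕ) : ∀ l, 1 ≤ l → l ≤ N → c m (2 * l) = 0 := by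
  rw [tauLength, if_pos he] at hN
  have hq := Nat.even_iff.mp he
  induction m with
  | zero => exact fun l hl hlN => hc0 _ (by omega) (by omega)
  | succ m ih =>
    intro l hl hlN
    rcases hlN.lt_or_eq with hlN | rfl
    · rw [hrec1 _ m.succ_pos _ (by omega) (by omega), ← mul_add_one]
      exact ih (l + 1) (by omega) hlN
    · rw [show 2 * l = q - 2 by omega, hrec2 _ m.succ_pos]
      exact ih 1 le_rfl (by omega)

end FaceCounts

end FaceCount

open FaceCount

theorem cn_tau_values_general (q : ℕ)
    (N : ℕ) (hN : N = if Even q then (q - 2) / 2 else q - 2)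
    (τ : ℕ → ℕ)
    (hτ : ∀ k, k ≤ N →
      τ k = if Even q ∨ k ≤ (N - 1) / 2 then q - 1 - 2 * k else 2 * q - 3 - 2 * k)
    (σ : ℕ → ℤ) (c : ℕ → ℕ → ℤ)
    (hc0 : ∀ j, 1 ≤ j → j ≤ q - 2 → c 0 j = 0)
    (hc0' : c 0 (q - 1) = σ 1)
    (hrec1 : ∀ n, 1 ≤ n → ∀ l, 1 ≤ l → l ≤ q - 3 → c n l = c (n - 1) (l + 2))
    (hrec2 : ∀ n, 1 ≤ n → c n (q - 2) = c (n - 1) 2)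
    (hrec3 : ∀ n, 1 ≤ n → c n (q - 1) = c n 1 + σ (n + 1) - σ n)
    (n : ℕ) (hn1 : 1 ≤ n) (hnN : n ≤ N) :
    (∀ l, 1 ≤ l → l ≤ n - 1 → c n (τ l) = σ (n + 1 - l) - σ (n - l)) ∧
    c n (τ n) = σ 1 ∧
    (∀ l, n + 1 ≤ l → l ≤ N → c n (τ l) = 0) ∧
    (Even q → ∀ l, 1 ≤ l → l ≤ N → c n (2 * l) = 0) := by
  refine ⟨fun l hl hln => ?_, ?_, fun l hnl hlN => ?_, fun he => ?_⟩
  · rw [c_tau_diag hN hτ hrec1 hrec2 (k := l) (by omega) le_rfl (by omega), Nat.sub_self,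
      tau_zero hN hτ, c_q_sub_one_eq hN hτ hc0 hrec1 hrec2 hrec3 (by omega) (by omega),
      Nat.sub_add_comm (by omega)]
  · rw [c_tau_diag hN hτ hrec1 hrec2 le_rfl le_rfl hnN, Nat.sub_self, tau_zero hN hτ, hc0']
  · exact c_tau_eq_zero_of_lt hN hτ hc0 hrec1 hrec2 hnl hlN
  · exact c_even_eq_zero hN he hc0 hrec1 hrec2 n

/-- STATEMENT 8 (the paper's Lemma 3.1), stated for abstract integer sequences satisfying the
recurrence relations (i)–(iii) of the face-counting quantities `c n j` of a `q`-face regular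
plane tessellation without cut locus. -/
theorem cn_tau_values (q : ℕ) (hq : 3 ≤ q)
    (N : ℕ) (hN : N = if Even q then (q - 2) / 2 else q - 2)
    (τ : ℕ → ℕ)
    (hτ : ∀ k, k ≤ N →
      τ k = if Even q ∨ k ≤ (N - 1) / 2 then q - 1 - 2 * k else 2 * q - 3 - 2 * k)
    (σ : ℕ → ℤ) (c : ℕ → ℕ → ℤ)
    (hc0 : ∀ j, 1 ≤ j → j ≤ q - 2 → c 0 j = 0)
    (hc0' : c 0 (q - 1) = σ 1)
    (hrec1 : ∀ n, 1 ≤ n → ∀ l, 1 ≤ l → l ≤ q - 3 → c n l = c (n - 1) (l + 2))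
    (hrec2 : ∀ n, 1 ≤ n → c n (q - 2) = c (n - 1) 2)
    (hrec3 : ∀ n, 1 ≤ n → c n (q - 1) = c n 1 + σ (n + 1) - σ n)
    (n : ℕ) (hn1 : 1 ≤ n) (hnN : n ≤ N) :
    (∀ l, 1 ≤ l → l ≤ n - 1 → c n (τ l) = σ (n + 1 - l) - σ (n - l)) ∧
    c n (τ n) = σ 1 ∧
    (∀ l, n + 1 ≤ l → l ≤ N → c n (τ l) = 0) ∧
    (Even q → ∀ l, 1 ≤ l → l ≤ N → c n (2 * l) = 0) :=
  cn_tau_values_general q N hN τ hτ σ c hc0 hc0' hrec1 hrec2 hrec3 n hn1 hnN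
end

section
/- Let q ≥ 3 be an integer, N = (q−2)/2 if q is even and N = q−2 if q is odd, and assume N ≥ 2. For 0 ≤ l ≤ N−1 let b_l = 4/(q−2), except b_l = 4/(q−2) − 2 when q is odd and l = (N−1)/2. Let σ : ℕ → ℤ and c_n^j (n ≥ 0, 1 ≤ j ≤ q−1) be integers satisfying: c_0^j = 0 for 1 ≤ j ≤ q−2, c_0^{q−1} = σ_1, and for all n ≥ 1: c_n^l = c_{n−1}^{l+2} for 1 ≤ l ≤ q−3, c_n^{q−2} = c_{n−1}^2, and c_n^{q−1} = c_n^1 + σ_{n+1} − σ_n. Then, as identities of real (or rational) numbers: for 1 ≤ n ≤ N−1, ((q−6)/(q−2))·σ_n + Σ_{j=2}^{q−2} ((q−2j)/(q−2))·c_n^j = Σ_{l=1}^{n−1} b_l·σ_{n−l}; and for n = N, ((q−6)/(q−2))·σ_N + Σ_{j=2}^{q−2} ((q−2j)/(q−2))·c_N^j = ((6−q)/(q−2))·σ_1 + Σ_{l=1}^{N−2} b_l·σ_{N−l}. -/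
lemma sum_shift2 {M : Type*} [AddCommMonoid M] (f : ℕ → M) (a b : ℕ) :
    ∑ j ∈ Finset.Icc a b, f (j + 2) = ∑ k ∈ Finset.Icc (a + 2) (b + 2), f k := by
  rw [← Finset.map_add_right_Icc a b 2, Finset.sum_map]
  rfl

lemma sum_rev {M : Type*} [AddCommMonoid M] (f : ℕ → M) (n k : ℕ) (h : k + 1 ≤ n) :
    ∑ l ∈ Finset.Icc 1 k, f (n - l) = ∑ t ∈ Finset.Icc (n - k) (n - 1), f t := by
  refine Finset.sum_nbij' (fun l => n - l) (fun t => n - t) ?_ ?_ ?_ ?_ ?_ <;>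
    intros a ha <;> simp only [Finset.mem_Icc] at * <;> omega

set_option maxHeartbeats 4000000 in
/-- STATEMENT 9 (the paper's Lemma 3.2), stated for abstract integer sequences satisfying the
recurrence relations (i)–(iii) of the face-counting quantities `c n j` of a `q`-face regular
plane tessellation without cut locus.  Here `N = (q-2)/2` for `q` even and `N = q-2` for `q`
odd, and `b l = 4/(q-2)` except `b ((N-1)/2) = 4/(q-2) - 2` when `q` is odd. -/
theorem curvature_sum_identity (q : ℕ) (hq : 3 ≤ q)
    (N : ℕ) (hN : N = if Even q then (q - 2) / 2 else q - 2) (hN2 : 2 ≤ N)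
    (b : ℕ → ℝ)
    (hb : ∀ l, l ≤ N - 1 →
      b l = if ¬ Even q ∧ l = (N - 1) / 2 then 4 / ((q : ℝ) - 2) - 2 else 4 / ((q : ℝ) - 2))
    (σ : ℕ → ℤ) (c : ℕ → ℕ → ℤ)
    (hc0 : ∀ j, 1 ≤ j → j ≤ q - 2 → c 0 j = 0)
    (hc0' : c 0 (q - 1) = σ 1)
    (hrec1 : ∀ n, 1 ≤ n → ∀ l, 1 ≤ l → l ≤ q - 3 → c n l = c (n - 1) (l + 2))
    (hrec2 : ∀ n, 1 ≤ n → c n (q - 2) = c (n - 1) 2)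
    (hrec3 : ∀ n, 1 ≤ n → c n (q - 1) = c n 1 + σ (n + 1) - σ n) :
    (∀ n, 1 ≤ n → n ≤ N - 1 →
      ((q : ℝ) - 6) / ((q : ℝ) - 2) * (σ n : ℝ)
          + ∑ j ∈ Finset.Icc 2 (q - 2), ((q : ℝ) - 2 * j) / ((q : ℝ) - 2) * (c n j : ℝ)
        = ∑ l ∈ Finset.Icc 1 (n - 1), b l * (σ (n - l) : ℝ)) ∧
    ((q : ℝ) - 6) / ((q : ℝ) - 2) * (σ N : ℝ)
          + ∑ j ∈ Finset.Icc 2 (q - 2), ((q : ℝ) - 2 * j) / ((q : ℝ) - 2) * (c N j : ℝ)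
        = (6 - (q : ℝ)) / ((q : ℝ) - 2) * (σ 1 : ℝ)
          + ∑ l ∈ Finset.Icc 1 (N - 2), b l * (σ (N - l) : ℝ) := by
  classical
  have hpar : (Even q ∧ q = 2 * N + 2) ∨
      (¬ Even q ∧ ∃ u, 1 ≤ u ∧ N = 2 * u + 1 ∧ q = 2 * u + 3 ∧ (N - 1) / 2 = u) := by
    rcases Nat.even_or_odd q with h | h
    · left
      refine ⟨h, ?_⟩
      rw [if_pos h] at hN
      obtain ⟨t, ht⟩ := h
      omega
    · right
      have h' : ¬ Even q := by simpa [Nat.not_even_iff_odd] using h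
      rw [if_neg h'] at hN
      obtain ⟨t, ht⟩ := h
      exact ⟨h', t - 1, by omega, by omega, by omega, by omega⟩
  have h5 : 5 ≤ q := by
    rcases hpar with ⟨_, h⟩ | ⟨_, u, hu, h1, h2, _⟩ <;> omega
  have hq2 : ((q : ℝ) - 2) ≠ 0 := by
    have : (3 : ℝ) ≤ (q : ℝ) := by exact_mod_cast hq
    linarith
  have chain : ∀ k m j, 1 ≤ j → j + 2 * k ≤ q - 1 → k ≤ m →
      c m j = c (m - k) (j + 2 * k) := by
    intro k
    induction k with
    | zero => intro m j _ _ _; simp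
    | succ k ih =>
      intro m j h1 h2 h3
      have e1 : c m j = c (m - 1) (j + 2) := hrec1 m (by omega) j h1 (by omega)
      have e2 := ih (m - 1) (j + 2) (by omega) (by omega) (by omega)
      rw [e1, e2, show m - 1 - k = m - (k + 1) by omega,
        show j + 2 + 2 * k = j + 2 * (k + 1) by omega]
  have C123 : ∀ m, m ≤ N - 1 → c m 1 = 0 ∧
      (c m 2 = if ¬ Even q ∧ (N - 1) / 2 + 1 ≤ m + 1 then
        (if m = (N - 1) / 2 then σ 1 else σ (m - (N - 1) / 2 + 1) - σ (m - (N - 1) / 2)) else 0) ∧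
      (c m 3 = if m + 1 = N then σ 1 else 0) := by
      intro m
      induction m using Nat.strong_induction_on with
      | _ m IH =>
      intro hm
      have hc1 : c m 1 = 0 := by
        rcases Nat.eq_zero_or_pos m with rfl | hm1
        · exact hc0 1 le_rfl (by omega)
        · have h13 : c m 1 = c (m - 1) 3 := by
            have := hrec1 m (by omega) 1 le_rfl (by omega)
            simpa using this
          have h3 := (IH (m - 1) (by omega) (by omega)).2.2
          rw [h13, h3, if_neg (by omega)]
      refine ⟨hc1, ?_, ?_⟩
      · -- column 2
        rcases hpar with ⟨hev, hqe⟩ | ⟨hod, u, hu, hNu, hqu, hlu⟩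
        · -- even q : c m 2 = 0
          have := chain m m 2 (by omega) (by omega) le_rfl
          rw [if_neg (fun h => h.1 hev), this, Nat.sub_self]
          exact hc0 (2 + 2 * m) (by omega) (by omega)
        · rw [hlu]
          by_cases hmu : m < u
          · have := chain m m 2 (by omega) (by omega) le_rfl
            rw [if_neg (by rintro ⟨-, h2⟩; omega), this, Nat.sub_self]
            exact hc0 (2 + 2 * m) (by omega) (by omega)
          · have hch := chain u m 2 (by omega) (by omega) (by omega)
            rw [show 2 + 2 * u = q - 1 by omega] at hch
            by_cases hme : m = u
            · subst hme
              rw [if_pos ⟨hod, by omega⟩, if_pos rfl, hch, Nat.sub_self, hc0']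
            · have hm1 : 1 ≤ m - u := by omega
              have hr := hrec3 (m - u) (by omega)
              have hc1' := (IH (m - u) (by omega) (by omega)).1
              rw [if_pos ⟨hod, by omega⟩, if_neg hme, hch, hr, hc1']
              ring
      · -- column 3
        rcases hpar with ⟨hev, hqe⟩ | ⟨hod, u, hu, hNu, hqu, hlu⟩
        · -- even q
          have := chain m m 3 (by omega) (by omega) le_rfl
          rw [this, Nat.sub_self]
          by_cases hmN : m + 1 = N
          · rw [if_pos hmN, show 3 + 2 * m = q - 1 by omega]
            exact hc0'
          · rw [if_neg hmN]
            exact hc0 (3 + 2 * m) (by omega) (by omega)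
        · by_cases hmu : m ≤ u - 1
          · have := chain m m 3 (by omega) (by omega) le_rfl
            rw [if_neg (by omega), this, Nat.sub_self]
            exact hc0 (3 + 2 * m) (by omega) (by omega)
          · have hch := chain (u - 1) m 3 (by omega) (by omega) (by omega)
            rw [show 3 + 2 * (u - 1) = q - 2 by omega] at hch
            have hr := hrec2 (m - (u - 1)) (by omega)
            rw [show m - (u - 1) - 1 = m - u by omega] at hr
            have h2 := (IH (m - u) (by omega) (by omega)).2.1
            rw [hlu] at h2
            rw [hch, hr, h2]
            by_cases hmN : m + 1 = N
            · rw [if_pos hmN, if_pos (⟨hod, by omega⟩ : ¬Even q ∧ _), if_pos (by omega : m - u = u)]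
            · rw [if_neg hmN, if_neg (by rintro ⟨-, h⟩; omega)]
  have T : ∀ m, m ≤ N - 1 → (∑ j ∈ Finset.Icc 1 (q - 1), c m j) = σ (m + 1) := by
      intro m
      induction m with
      | zero =>
        intro _
        rw [Finset.sum_eq_single_of_mem (q - 1) (by simp [Finset.mem_Icc]; omega)
          (fun j hj hne => hc0 j (by simp [Finset.mem_Icc] at hj; omega)
            (by simp [Finset.mem_Icc] at hj; omega))]
        exact hc0'
      | succ m ihm =>
        intro hm
        have ih := ihm (by omega)
        have e1 : Finset.Icc 1 (q - 1) = insert (q - 2) (insert (q - 1) (Finset.Icc 1 (q - 3))) := by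
          ext x; simp only [Finset.mem_insert, Finset.mem_Icc]; omega
        have e2 : Finset.Icc 1 (q - 1) = insert 1 (insert 2 (Finset.Icc 3 (q - 1))) := by
          ext x; simp only [Finset.mem_insert, Finset.mem_Icc]; omega
        have hnm1 : (q - 2) ∉ insert (q - 1) (Finset.Icc 1 (q - 3)) := by
          simp only [Finset.mem_insert, Finset.mem_Icc]; omega
        have hnm2 : (q - 1) ∉ Finset.Icc 1 (q - 3) := by
          simp only [Finset.mem_Icc]; omega
        have hnm3 : (1 : ℕ) ∉ insert 2 (Finset.Icc 3 (q - 1)) := by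
          simp only [Finset.mem_insert, Finset.mem_Icc]; omega
        have hnm4 : (2 : ℕ) ∉ Finset.Icc 3 (q - 1) := by
          simp only [Finset.mem_Icc]; omega
        have hmid : ∑ j ∈ Finset.Icc 1 (q - 3), c (m + 1) j = ∑ k ∈ Finset.Icc 3 (q - 1), c m k := by
          rw [Finset.sum_congr rfl (fun j hj => by
            simp only [Finset.mem_Icc] at hj
            have := hrec1 (m + 1) (by omega) j hj.1 hj.2
            simpa using this)]
          have := sum_shift2 (fun k => c m k) 1 (q - 3)
          rw [this, show 1 + 2 = 3 by rfl, show q - 3 + 2 = q - 1 by omega]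
        have hC := C123 m (by omega)
        have hC' := C123 (m + 1) hm
        rw [e1, Finset.sum_insert hnm1, Finset.sum_insert hnm2, hmid,
          hrec2 (m + 1) (by omega), hrec3 (m + 1) (by omega)]
        rw [e2, Finset.sum_insert hnm3, Finset.sum_insert hnm4] at ih
        simp only [Nat.add_sub_cancel] at *
        rw [hC'.1]
        rw [hC.1] at ih
        linarith [ih]
  have C1 : ∀ m, m ≤ N - 1 → c m 1 = 0 := fun m hm => (C123 m hm).1
  have hL : ∀ n, 1 ≤ n → n ≤ N - 1 →
      ∑ j ∈ Finset.Icc 2 (q - 2), ((q : ℝ) - 2 * j) / ((q : ℝ) - 2) * (c (n + 1) j : ℝ)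
        = ∑ j ∈ Finset.Icc 2 (q - 2), ((q : ℝ) - 2 * j) / ((q : ℝ) - 2) * (c n j : ℝ)
          + ((q : ℝ) - 6) / ((q : ℝ) - 2) * (σ n : ℝ)
          - ((q : ℝ) - 6) / ((q : ℝ) - 2) * (σ (n + 1) : ℝ)
          + 4 / ((q : ℝ) - 2) * (σ n : ℝ) - 2 * (c n 2 : ℝ) - (c n 3 : ℝ) := by
      intro n hn hnN
      have hc1 : c n 1 = 0 := C1 n (by omega)
      have hT := T n (by omega)
      have hq1 : c n (q - 1) = σ (n + 1) - σ n := by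
        rw [hrec3 n hn, hc1]; ring
      -- step 1 : split off j = q-2 and rewrite c (n+1) j via the recurrences
      have e1 : Finset.Icc 2 (q - 2) = insert (q - 2) (Finset.Icc 2 (q - 3)) := by
        ext x; simp only [Finset.mem_insert, Finset.mem_Icc]; omega
      have hnm1 : (q - 2) ∉ Finset.Icc 2 (q - 3) := by simp only [Finset.mem_Icc]; omega
      have step1 : ∑ j ∈ Finset.Icc 2 (q - 2), ((q : ℝ) - 2 * j) / ((q : ℝ) - 2) * (c (n + 1) j : ℝ)
          = ((q : ℝ) - 2 * ((q - 2 : ℕ) : ℝ)) / ((q : ℝ) - 2) * (c n 2 : ℝ)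
            + ∑ j ∈ Finset.Icc 2 (q - 3),
                (fun k => ((q : ℝ) - 2 * (((k - 2 : ℕ)) : ℝ)) / ((q : ℝ) - 2) * (c n k : ℝ)) (j + 2) := by
        rw [e1, Finset.sum_insert hnm1]
        congr 1
        · rw [hrec2 (n + 1) (by omega)]
          simp
        · refine Finset.sum_congr rfl (fun j hj => ?_)
          simp only [Finset.mem_Icc] at hj
          have := hrec1 (n + 1) (by omega) j (by omega) (by omega)
          simp only [Nat.add_sub_cancel] at this ⊢
          rw [this]
      have step2 := sum_shift2
        (fun k => ((q : ℝ) - 2 * (((k - 2 : ℕ)) : ℝ)) / ((q : ℝ) - 2) * (c n k : ℝ)) 2 (q - 3)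
      rw [step1, step2, show 2 + 2 = 4 by rfl, show q - 3 + 2 = q - 1 by omega]
      beta_reduce
      -- step 3 : split the weight
      have step3 : ∑ k ∈ Finset.Icc 4 (q - 1), ((q : ℝ) - 2 * (((k - 2 : ℕ)) : ℝ)) / ((q : ℝ) - 2) * (c n k : ℝ)
          = ∑ k ∈ Finset.Icc 4 (q - 1), (((q : ℝ) - 2 * (k : ℝ)) / ((q : ℝ) - 2) * (c n k : ℝ)
              + 4 / ((q : ℝ) - 2) * (c n k : ℝ)) := by
        refine Finset.sum_congr rfl (fun k hk => ?_)
        simp only [Finset.mem_Icc] at hk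
        have h2k : (2 : ℕ) ≤ k := by omega
        rw [Nat.cast_sub h2k]
        push_cast
        field_simp
        ring
      rw [step3, Finset.sum_add_distrib, ← Finset.mul_sum]
      -- step 5 : evaluate the plain sum over Icc 4 (q-1)
      have d1 : Finset.Icc 1 (q - 1) = insert 1 (insert 2 (insert 3 (Finset.Icc 4 (q - 1)))) := by
        ext x; simp only [Finset.mem_insert, Finset.mem_Icc]; omega
      have hd1a : (1 : ℕ) ∉ insert 2 (insert 3 (Finset.Icc 4 (q - 1))) := by
        simp only [Finset.mem_insert, Finset.mem_Icc]; omega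
      have hd1b : (2 : ℕ) ∉ insert 3 (Finset.Icc 4 (q - 1)) := by
        simp only [Finset.mem_insert, Finset.mem_Icc]; omega
      have hd1c : (3 : ℕ) ∉ Finset.Icc 4 (q - 1) := by
        simp only [Finset.mem_Icc]; omega
      have e4 : (∑ k ∈ Finset.Icc 4 (q - 1), c n k) = σ (n + 1) - c n 2 - c n 3 := by
        rw [d1, Finset.sum_insert hd1a, Finset.sum_insert hd1b, Finset.sum_insert hd1c, hc1] at hT
        linarith [hT]
      have e4' : (∑ k ∈ Finset.Icc 4 (q - 1), (c n k : ℝ)) = (σ (n + 1) : ℝ) - (c n 2 : ℝ) - (c n 3 : ℝ) := by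
        have h := congrArg (fun z : ℤ => (z : ℝ)) e4
        push_cast at h
        exact h
      -- step 4 : relate the weighted sum over Icc 4 (q-1) to the one over Icc 2 (q-2)
      have d2 : Finset.Icc 2 (q - 1) = insert 2 (insert 3 (Finset.Icc 4 (q - 1))) := by
        ext x; simp only [Finset.mem_insert, Finset.mem_Icc]; omega
      have d3 : Finset.Icc 2 (q - 1) = insert (q - 1) (Finset.Icc 2 (q - 2)) := by
        ext x; simp only [Finset.mem_insert, Finset.mem_Icc]; omega
      have hd2a : (2 : ℕ) ∉ insert 3 (Finset.Icc 4 (q - 1)) := hd1b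
      have hd3a : (q - 1) ∉ Finset.Icc 2 (q - 2) := by simp only [Finset.mem_Icc]; omega
      have e5 : ∑ k ∈ Finset.Icc 4 (q - 1), ((q : ℝ) - 2 * (k : ℝ)) / ((q : ℝ) - 2) * (c n k : ℝ)
          = ∑ k ∈ Finset.Icc 2 (q - 2), ((q : ℝ) - 2 * (k : ℝ)) / ((q : ℝ) - 2) * (c n k : ℝ)
            + ((q : ℝ) - 2 * (((q - 1 : ℕ)) : ℝ)) / ((q : ℝ) - 2) * (c n (q - 1) : ℝ)
            - ((q : ℝ) - 2 * 2) / ((q : ℝ) - 2) * (c n 2 : ℝ)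
            - ((q : ℝ) - 2 * 3) / ((q : ℝ) - 2) * (c n 3 : ℝ) := by
        have h1 : ∑ k ∈ Finset.Icc 2 (q - 1), ((q : ℝ) - 2 * (k : ℝ)) / ((q : ℝ) - 2) * (c n k : ℝ)
            = ((q : ℝ) - 2 * 2) / ((q : ℝ) - 2) * (c n 2 : ℝ)
              + (((q : ℝ) - 2 * 3) / ((q : ℝ) - 2) * (c n 3 : ℝ)
              + ∑ k ∈ Finset.Icc 4 (q - 1), ((q : ℝ) - 2 * (k : ℝ)) / ((q : ℝ) - 2) * (c n k : ℝ)) := by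
          rw [d2, Finset.sum_insert hd2a, Finset.sum_insert hd1c]
          norm_num
        have h2 : ∑ k ∈ Finset.Icc 2 (q - 1), ((q : ℝ) - 2 * (k : ℝ)) / ((q : ℝ) - 2) * (c n k : ℝ)
            = ((q : ℝ) - 2 * (((q - 1 : ℕ)) : ℝ)) / ((q : ℝ) - 2) * (c n (q - 1) : ℝ)
              + ∑ k ∈ Finset.Icc 2 (q - 2), ((q : ℝ) - 2 * (k : ℝ)) / ((q : ℝ) - 2) * (c n k : ℝ) := by
          rw [d3, Finset.sum_insert hd3a]
        linarith [h1, h2]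
      rw [e5, e4']
      -- now pure algebra
      have hc2 : ((q - 2 : ℕ) : ℝ) = (q : ℝ) - 2 := by
        rw [Nat.cast_sub (by omega)]; norm_num
      have hc3 : ((q - 1 : ℕ) : ℝ) = (q : ℝ) - 1 := by
        rw [Nat.cast_sub (by omega)]; norm_num
      have hq1' : (c n (q - 1) : ℝ) = (σ (n + 1) : ℝ) - (σ n : ℝ) := by
        have h := congrArg (fun z : ℤ => (z : ℝ)) hq1
        push_cast at h
        exact h
      rw [hq1', hc2, hc3]
      field_simp
      ring
  have Q : ∀ n, 1 ≤ n → n ≤ N →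
      ((q : ℝ) - 6) / ((q : ℝ) - 2) * (σ n : ℝ)
          + ∑ j ∈ Finset.Icc 2 (q - 2), ((q : ℝ) - 2 * j) / ((q : ℝ) - 2) * (c n j : ℝ)
        = 4 / ((q : ℝ) - 2) * (∑ t ∈ Finset.Icc 1 (n - 1), (σ t : ℝ))
          - (if ¬ Even q ∧ (N - 1) / 2 + 1 ≤ n then 2 * (σ (n - (N - 1) / 2) : ℝ) else 0)
          - (if n = N then (σ 1 : ℝ) else 0) := by
      intro n hn
      induction n, hn using Nat.le_induction with
      | base =>
        intro _
        have hsum : ∑ j ∈ Finset.Icc 2 (q - 2), ((q : ℝ) - 2 * j) / ((q : ℝ) - 2) * (c 1 j : ℝ)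
            = ((q : ℝ) - 2 * ((q - 3 : ℕ) : ℝ)) / ((q : ℝ) - 2) * (σ 1 : ℝ) := by
          rw [Finset.sum_eq_single_of_mem (q - 3) (by simp only [Finset.mem_Icc]; omega)
            (fun j hj hne => ?_)]
          · have h1 : c 1 (q - 3) = c 0 (q - 1) := by
              have := hrec1 1 le_rfl (q - 3) (by omega) le_rfl
              simpa [show q - 3 + 2 = q - 1 by omega] using this
            rw [h1, hc0']
          · simp only [Finset.mem_Icc] at hj
            by_cases hj2 : j = q - 2
            · subst hj2
              rw [hrec2 1 le_rfl]
              simp only [Nat.sub_self]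
              rw [hc0 2 (by omega) (by omega)]
              norm_num
            · have h1 : c 1 j = c 0 (j + 2) := by
                have := hrec1 1 le_rfl j (by omega) (by omega)
                simpa using this
              rw [h1, hc0 (j + 2) (by omega) (by omega)]
              norm_num
        rw [hsum]
        have he : Finset.Icc 1 (1 - 1) = ∅ := by simp
        rw [he, Finset.sum_empty]
        have hif1 : ¬ (¬ Even q ∧ (N - 1) / 2 + 1 ≤ 1) := by
          rcases hpar with ⟨hev, _⟩ | ⟨hod, u, hu, hNu, hqu, hlu⟩
          · exact fun h => h.1 hev
          · rintro ⟨-, h⟩; omega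
        rw [if_neg hif1, if_neg (by omega : ¬ (1 : ℕ) = N)]
        have hc3 : ((q - 3 : ℕ) : ℝ) = (q : ℝ) - 3 := by
          rw [Nat.cast_sub (by omega)]; norm_num
        rw [hc3]
        field_simp
        ring
      | succ n hn ih =>
        intro hn1
        obtain ⟨m, rfl⟩ : ∃ m, n = m + 1 := ⟨n - 1, by omega⟩
        have hQn := ih (by omega)
        have hLn := hL (m + 1) (by omega) (by omega)
        have hC := C123 (m + 1) (by omega)
        have hc2R : (c (m + 1) 2 : ℝ) = if ¬ Even q ∧ (N - 1) / 2 + 1 ≤ m + 1 + 1 then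
            (if m + 1 = (N - 1) / 2 then (σ 1 : ℝ)
              else (σ (m + 1 - (N - 1) / 2 + 1) : ℝ) - (σ (m + 1 - (N - 1) / 2) : ℝ)) else 0 := by
          rw [hC.2.1]
          split_ifs <;> push_cast <;> ring
        have hc3R : (c (m + 1) 3 : ℝ) = if m + 1 + 1 = N then (σ 1 : ℝ) else 0 := by
          rw [hC.2.2]
          split_ifs <;> push_cast <;> ring
        rw [hc2R, hc3R] at hLn
        have hS : ∑ t ∈ Finset.Icc 1 (m + 1), (σ t : ℝ)
            = (∑ t ∈ Finset.Icc 1 m, (σ t : ℝ)) + (σ (m + 1) : ℝ) :=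
          Finset.sum_Icc_succ_top (by omega) _
        simp only [Nat.add_sub_cancel] at hQn ⊢
        rw [hLn, hS]
        rw [if_neg (by omega : ¬ m + 1 = N)] at hQn
        rcases hpar with ⟨hev, hqe⟩ | ⟨hod, u, hu, hNu, hqu, hlu⟩
        · have z1 : ∀ (P : Prop) (inst : Decidable P) (x : ℝ),
              (if ¬ Even q ∧ P then x else 0) = 0 := by
            intro P inst x
            exact if_neg (fun h => h.1 hev)
          simp only [z1] at hQn ⊢
          linarith [hQn]
        · rw [hlu] at hQn ⊢
          by_cases hx : u + 1 ≤ m + 1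
          · rw [if_pos ⟨hod, hx⟩] at hQn
            rw [if_pos (⟨hod, by omega⟩ : ¬ Even q ∧ u + 1 ≤ m + 1 + 1),
              if_pos (⟨hod, by omega⟩ : ¬ Even q ∧ u + 1 ≤ m + 1 + 1),
              if_neg (by omega : ¬ m + 1 = u),
              show m + 1 - u + 1 = m + 1 + 1 - u by omega]
            linarith [hQn]
          · by_cases hy : m + 1 = u
            · rw [if_neg (by rintro ⟨-, h⟩; omega)] at hQn
              rw [if_pos (⟨hod, by omega⟩ : ¬ Even q ∧ u + 1 ≤ m + 1 + 1),
                if_pos (⟨hod, by omega⟩ : ¬ Even q ∧ u + 1 ≤ m + 1 + 1),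
                if_pos hy, show m + 1 + 1 - u = 1 by omega]
              linarith [hQn]
            · rw [if_neg (by rintro ⟨-, h⟩; omega)] at hQn
              rw [if_neg (by rintro ⟨-, h⟩; omega : ¬ (¬ Even q ∧ u + 1 ≤ m + 1 + 1)),
                if_neg (by rintro ⟨-, h⟩; omega : ¬ (¬ Even q ∧ u + 1 ≤ m + 1 + 1))]
              linarith [hQn]
  have hbsum : ∀ n k, 1 ≤ n → k ≤ N - 2 → k + 1 ≤ n →
      ∑ l ∈ Finset.Icc 1 k, b l * (σ (n - l) : ℝ)
        = 4 / ((q : ℝ) - 2) * (∑ l ∈ Finset.Icc 1 k, (σ (n - l) : ℝ))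
          - (if ¬ Even q ∧ (N - 1) / 2 + 1 ≤ n ∧ (N - 1) / 2 ≤ k then
              2 * (σ (n - (N - 1) / 2) : ℝ) else 0) := by
    intro n k hn hk hkn
    have hterm : ∀ l ∈ Finset.Icc 1 k, b l * (σ (n - l) : ℝ)
        = 4 / ((q : ℝ) - 2) * (σ (n - l) : ℝ)
          - (if ¬ Even q ∧ l = (N - 1) / 2 then 2 * (σ (n - l) : ℝ) else 0) := by
      intro l hl
      simp only [Finset.mem_Icc] at hl
      rw [hb l (by omega)]
      split_ifs with h
      · ring
      · ring
    rw [Finset.sum_congr rfl hterm, Finset.sum_sub_distrib, ← Finset.mul_sum]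
    congr 1
    rcases hpar with ⟨hev, hqe⟩ | ⟨hod, u, hu, hNu, hqu, hlu⟩
    · rw [if_neg (fun h => h.1 hev)]
      exact Finset.sum_eq_zero (fun l _ => if_neg (fun h => h.1 hev))
    · rw [hlu]
      have e : ∀ l ∈ Finset.Icc 1 k, (if ¬ Even q ∧ l = u then 2 * (σ (n - l) : ℝ) else 0)
          = (if l = u then 2 * (σ (n - l) : ℝ) else 0) := by
        intro l _
        by_cases h : l = u
        · rw [if_pos ⟨hod, h⟩, if_pos h]
        · rw [if_neg (fun hh => h hh.2), if_neg h]
      rw [Finset.sum_congr rfl e, Finset.sum_ite_eq' (Finset.Icc 1 k) u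
        (fun l => 2 * (σ (n - l) : ℝ))]
      by_cases hm : u ∈ Finset.Icc 1 k
      · have hm' : 1 ≤ u ∧ u ≤ k := by simpa [Finset.mem_Icc] using hm
        rw [if_pos hm, if_pos (⟨hod, by omega, by omega⟩ : ¬ Even q ∧ u + 1 ≤ n ∧ u ≤ k)]
      · have hm' : ¬ (1 ≤ u ∧ u ≤ k) := by simpa [Finset.mem_Icc] using hm
        rw [if_neg hm, if_neg (by rintro ⟨-, h1, h2⟩; omega : ¬ (¬ Even q ∧ u + 1 ≤ n ∧ u ≤ k))]
  constructor
  · intro n h1 hn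
    rw [Q n h1 (by omega), if_neg (by omega : ¬ n = N),
      hbsum n (n - 1) h1 (by omega) (by omega),
      sum_rev (fun t => (σ t : ℝ)) n (n - 1) (by omega),
      show n - (n - 1) = 1 by omega]
    have hcond : (if ¬ Even q ∧ (N - 1) / 2 + 1 ≤ n then 2 * (σ (n - (N - 1) / 2) : ℝ) else 0)
        = (if ¬ Even q ∧ (N - 1) / 2 + 1 ≤ n ∧ (N - 1) / 2 ≤ n - 1 then
            2 * (σ (n - (N - 1) / 2) : ℝ) else 0) := by
      by_cases hx : ¬ Even q ∧ (N - 1) / 2 + 1 ≤ n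
      · rw [if_pos hx, if_pos (⟨hx.1, hx.2, by omega⟩ :
          ¬ Even q ∧ (N - 1) / 2 + 1 ≤ n ∧ (N - 1) / 2 ≤ n - 1)]
      · rw [if_neg hx, if_neg (by rintro ⟨a1, a2, a3⟩; exact hx ⟨a1, a2⟩ :
          ¬ (¬ Even q ∧ (N - 1) / 2 + 1 ≤ n ∧ (N - 1) / 2 ≤ n - 1))]
    rw [hcond]
    ring
  · rw [Q N (by omega) le_rfl, if_pos rfl,
      hbsum N (N - 2) (by omega) le_rfl (by omega),
      sum_rev (fun t => (σ t : ℝ)) N (N - 2) (by omega),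
      show N - (N - 2) = 2 by omega]
    have hS : ∑ t ∈ Finset.Icc 1 (N - 1), (σ t : ℝ)
        = (σ 1 : ℝ) + ∑ t ∈ Finset.Icc 2 (N - 1), (σ t : ℝ) := by
      rw [show Finset.Icc 1 (N - 1) = insert 1 (Finset.Icc 2 (N - 1)) from by
          ext x; simp only [Finset.mem_insert, Finset.mem_Icc]; omega,
        Finset.sum_insert (by simp only [Finset.mem_Icc]; omega)]
    rw [hS]
    have hxx : (if ¬ Even q ∧ (N - 1) / 2 + 1 ≤ N then 2 * (σ (N - (N - 1) / 2) : ℝ) else 0)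
        = (if ¬ Even q ∧ (N - 1) / 2 + 1 ≤ N ∧ (N - 1) / 2 ≤ N - 2 then
            2 * (σ (N - (N - 1) / 2) : ℝ) else 0) := by
      rcases hpar with ⟨hev, hqe⟩ | ⟨hod, u, hu, hNu, hqu, hlu⟩
      · rw [if_neg (fun h => h.1 hev), if_neg (fun h => h.1 hev)]
      · rw [if_pos ⟨hod, by omega⟩, if_pos ⟨hod, by omega, by omega⟩]
    rw [hxx]
    have key : (6 - (q : ℝ)) / ((q : ℝ) - 2) = 4 / ((q : ℝ) - 2) - 1 := by
      field_simp
      ring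
    rw [key]
    ring
end

section
/- Let q ≥ 3 be an integer, N = (q−2)/2 if q is even and N = q−2 if q is odd, and b_l (0 ≤ l ≤ N−1) as in the context. Let σ : ℕ → ℝ with σ_0 = 1, let c_n^j (n ≥ 0, 1 ≤ j ≤ q−1) be real numbers satisfying c_0^j = 0 for 1 ≤ j ≤ q−2, c_0^{q−1} = σ_1, and for all n ≥ 1: c_n^l = c_{n−1}^{l+2} (1 ≤ l ≤ q−3), c_n^{q−2} = c_{n−1}^2, c_n^{q−1} = c_n^1 + σ_{n+1} − σ_n. Let K : ℕ → ℝ satisfy K_0 = 1 − ((q−2)/(2q))·σ_1 and, for all n ≥ 1, Σ_{l=0}^{n} K_l = 1 − ((q−2)/(2q))·(σ_{n+1} − σ_n) + Σ_{j=2}^{q−2} ((q−2j)/(2q))·c_n^j. Set κ'_m = (2q/(q−2))·K_m. Then for all n ≥ 1: σ_{n+1} = σ_1 + Σ_{l=0}^{n−1} (b_l·σ_{n−l} − κ'_{n−l}) if 1 ≤ n < N; σ_{N+1} = Σ_{l=0}^{N−1} (b_l·σ_{N−l} − κ'_{N−l}) if n = N; and σ_{n+1} = −σ_{n−N} + Σ_{l=0}^{N−1}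 (b_l·σ_{n−l} − κ'_{n−l}) if n > N. -/
/-!
The recurrences for `c` form a shift register: a value entering at index `q - 1` moves down by two
indices per step (wrapping from `2` to `q - 2` when `q` is odd), reaches index `1` after `N` steps,
and is fed back there by (iii) together with the increment `σ (n + 1) - σ n`. Hence `c n j` is
`y (n - k)` for the position `k` of `j` on this chain, where `y m = c m (q - 1)` satisfies
`y m - y (m - N) = σ (m + 1) - σ m`. Equation (6.3) reads `∑_{l ≤ n} K l = 1 + ∑_j w_j c n j` with
`w_j = (q - 2j) / (2q)`, so the total curvature of `N` consecutive spheres is a convolution of the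
weights along the chain with the increments of `σ`. Abel summation turns it into `∑ b_l σ (n - l)`,
because `(q - 2) / (2q) · b_l` is the increment of `w` from position `l` to position `l + 1`.
-/

open Finset

namespace GrowthRecursion

section Delay

variable {R : Type*}

def delay [Zero R] (y : ℕ → R) (k n : ℕ) : R := if k ≤ n then y (n - k) else 0

theorem delay_sub_delay_eq [AddCommGroup R] {N : ℕ} (hN : 1 ≤ N) {σ y : ℕ → R} (hy0 : y 0 = σ 1)
    (hy : ∀ m, 1 ≤ m → y m = σ (m + 1) - σ m + if N ≤ m then y (m - N) else 0) (k n : ℕ) :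
    delay y k n - (if N ≤ n then delay y k (n - N) else 0)
      = delay (fun m => σ (m + 1)) k n - delay (fun m => σ (m + 1)) (k + 1) n := by
  unfold delay
  rcases lt_trichotomy k n with hkn | rfl | hkn
  · rw [hy (n - k) (by omega)]
    by_cases hNn : N ≤ n - k
    · simp only [if_pos hkn.le, if_pos (show N ≤ n by omega), if_pos hNn,
        if_pos (show k ≤ n - N by omega), if_pos (show k + 1 ≤ n by omega),
        show n - N - k = n - k - N by omega, show n - (k + 1) + 1 = n - k by omega]
      abel
    · simp only [if_pos hkn.le, if_neg hNn, if_pos (show k + 1 ≤ n by omega),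
        show n - (k + 1) + 1 = n - k by omega]
      split_ifs <;> first | omega | abel
  · simp only [le_refl, if_true, Nat.sub_self, hy0, if_neg (show ¬ k + 1 ≤ k by omega)]
    split_ifs <;> first | omega | simp
  · simp only [if_neg (show ¬ k ≤ n by omega), if_neg (show ¬ k + 1 ≤ n by omega)]
    split_ifs <;> first | omega | simp

variable [CommRing R]

theorem sum_range_succ_mul_sub_eq (u t : ℕ → R) (M : ℕ) :
    ∑ k ∈ range (M + 1), u k * (t k - t (k + 1))
      = u 0 * t 0 - u M * t (M + 1) + ∑ k ∈ range M, (u (k + 1) - u k) * t (k + 1) := by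
  induction M with
  | zero => simp [mul_sub]
  | succ M ih => rw [sum_range_succ, ih, sum_range_succ]; ring

theorem sum_mul_delay_sub_eq {N : ℕ} (hN : 1 ≤ N) {σ y : ℕ → R} (hy0 : y 0 = σ 1)
    (hy : ∀ m, 1 ≤ m → y m = σ (m + 1) - σ m + if N ≤ m then y (m - N) else 0) (u : ℕ → R)
    (n : ℕ) :
    ∑ k ∈ range (N + 1), u k * delay y k n
        - (if N ≤ n then ∑ k ∈ range (N + 1), u k * delay y k (n - N) else 0)
      = u 0 * σ (n + 1) - u N * delay (fun m => σ (m + 1)) (N + 1) n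
        + ∑ k ∈ range N, (u (k + 1) - u k) * delay (fun m => σ (m + 1)) (k + 1) n := by
  have hsplit : ∑ k ∈ range (N + 1), u k * delay y k n
        - (if N ≤ n then ∑ k ∈ range (N + 1), u k * delay y k (n - N) else 0)
      = ∑ k ∈ range (N + 1), u k * (delay y k n - if N ≤ n then delay y k (n - N) else 0) := by
    split_ifs <;> simp [mul_sub, sum_sub_distrib]
  simp only [hsplit, delay_sub_delay_eq hN hy0 hy, sum_range_succ_mul_sub_eq]
  simp [delay]

theorem sum_range_mul_delay_succ (β σ : ℕ → R) (M n : ℕ) :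
    ∑ k ∈ range M, β k * delay (fun m => σ (m + 1)) (k + 1) n
      = ∑ k ∈ range (min M n), β k * σ (n - k) := by
  rw [← sum_range_add_sum_Ico _ (min_le_left M n), sum_eq_zero (s := Ico (min M n) M), add_zero]
  · refine sum_congr rfl fun k hk => ?_
    rw [mem_range, lt_min_iff] at hk
    simp only [delay, if_pos (show k + 1 ≤ n by omega), show n - (k + 1) + 1 = n - k by omega]
  · intro k hk
    rw [mem_Ico, min_le_iff] at hk
    simp only [delay, if_neg (show ¬ k + 1 ≤ n by omega), mul_zero]

end Delay

/-- The index reached from `q - 1` after `k` steps `j ↦ j - 2`, with `2 ↦ q - 2`; for even `q`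
this chain runs through the odd indices only, the even ones staying `0`. -/
def chainIndex (q k : ℕ) : ℕ := if 2 * k + 2 ≤ q then q - 1 - 2 * k else 2 * q - 3 - 2 * k

variable {q N : ℕ}

theorem chainIndex_zero (q : ℕ) : chainIndex q 0 = q - 1 := by
  unfold chainIndex; split_ifs <;> omega

theorem chainIndex_cycleLength (hqN : q % 2 = 0 ∧ 2 * N + 2 = q ∨ q % 2 = 1 ∧ N + 2 = q) :
    chainIndex q N = 1 := by
  unfold chainIndex; split_ifs <;> omega

theorem chainIndex_mem (hqN : q % 2 = 0 ∧ 2 * N + 2 = q ∨ q % 2 = 1 ∧ N + 2 = q) {k : ℕ}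
    (hk : 1 ≤ k) (hkN : k ≤ N) :
    1 ≤ chainIndex q k ∧ chainIndex q k ≤ q - 2 := by
  unfold chainIndex; split_ifs <;> omega

theorem chainIndex_succ (hqN : q % 2 = 0 ∧ 2 * N + 2 = q ∨ q % 2 = 1 ∧ N + 2 = q) {k : ℕ}
    (hk : k + 1 ≤ N) :
    (1 ≤ chainIndex q (k + 1) ∧ chainIndex q (k + 1) ≤ q - 3 ∧
        chainIndex q k = chainIndex q (k + 1) + 2) ∨
      (chainIndex q (k + 1) = q - 2 ∧ chainIndex q k = 2) := by
  unfold chainIndex; split_ifs <;> omega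

theorem chainIndex_injOn (hqN : q % 2 = 0 ∧ 2 * N + 2 = q ∨ q % 2 = 1 ∧ N + 2 = q) :
    Set.InjOn (chainIndex q) (range (N + 1)) := by
  intro k hk l hl h
  simp only [coe_range, Set.mem_Iio] at hk hl
  unfold chainIndex at h; split_ifs at h <;> omega

theorem exists_chainIndex_eq (hqN : q % 2 = 0 ∧ 2 * N + 2 = q ∨ q % 2 = 1 ∧ N + 2 = q) {j : ℕ}
    (hj : 1 ≤ j) (hjq : j ≤ q - 1)
    (hpar : ¬ (q % 2 = 0 ∧ j % 2 = 0)) : ∃ k ≤ N, chainIndex q k = j := by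
  by_cases h : (q - 1 - j) % 2 = 0
  · exact ⟨(q - 1 - j) / 2, by omega, by unfold chainIndex; split_ifs <;> omega⟩
  · exact ⟨(2 * q - 3 - j) / 2, by omega, by unfold chainIndex; split_ifs <;> omega⟩

theorem chainIndex_eq_two_iff (hqN : q % 2 = 0 ∧ 2 * N + 2 = q ∨ q % 2 = 1 ∧ N + 2 = q) {k : ℕ}
    (hk : k + 1 ≤ N) : chainIndex q k = 2 ↔ ¬ Even q ∧ k = (N - 1) / 2 := by
  rw [Nat.not_even_iff_odd, Nat.odd_iff]
  unfold chainIndex; split_ifs <;> omega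

section FaceCounts

variable {σ : ℕ → ℝ} {c : ℕ → ℕ → ℝ}

theorem c_succ_chainIndex_succ (hqN : q % 2 = 0 ∧ 2 * N + 2 = q ∨ q % 2 = 1 ∧ N + 2 = q)
    (hrec1 : ∀ n, 1 ≤ n → ∀ l, 1 ≤ l → l ≤ q - 3 → c n l = c (n - 1) (l + 2))
    (hrec2 : ∀ n, 1 ≤ n → c n (q - 2) = c (n - 1) 2) {k : ℕ} (hk : k + 1 ≤ N) (n : ℕ) :
    c (n + 1) (chainIndex q (k + 1)) = c n (chainIndex q k) := by
  rcases chainIndex_succ hqN hk with ⟨h1, h2, h3⟩ | ⟨h1, h2⟩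
  · rw [hrec1 (n + 1) n.succ_pos _ h1 h2, h3, Nat.add_sub_cancel]
  · rw [h1, h2, hrec2 (n + 1) n.succ_pos, Nat.add_sub_cancel]

theorem c_chainIndex (hqN : q % 2 = 0 ∧ 2 * N + 2 = q ∨ q % 2 = 1 ∧ N + 2 = q)
    (hc0 : ∀ j, 1 ≤ j → j ≤ q - 2 → c 0 j = 0)
    (hrec1 : ∀ n, 1 ≤ n → ∀ l, 1 ≤ l → l ≤ q - 3 → c n l = c (n - 1) (l + 2))
    (hrec2 : ∀ n, 1 ≤ n → c n (q - 2) = c (n - 1) 2) {k : ℕ} (hk : k ≤ N) (n : ℕ) :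
    c n (chainIndex q k) = delay (fun m => c m (q - 1)) k n := by
  induction k generalizing n with
  | zero => simp [delay, chainIndex_zero]
  | succ k ih =>
    cases n with
    | zero =>
      obtain ⟨h1, h2⟩ := chainIndex_mem hqN k.succ_pos hk
      simp [delay, hc0 _ h1 h2]
    | succ n =>
      rw [c_succ_chainIndex_succ hqN hrec1 hrec2 hk, ih (by omega)]
      simp only [delay, Nat.add_le_add_iff_right, Nat.add_sub_add_right]

theorem c_eq_zero_of_even (hq : q % 2 = 0) (hc0 : ∀ j, 1 ≤ j → j ≤ q - 2 → c 0 j = 0)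
    (hrec1 : ∀ n, 1 ≤ n → ∀ l, 1 ≤ l → l ≤ q - 3 → c n l = c (n - 1) (l + 2))
    (hrec2 : ∀ n, 1 ≤ n → c n (q - 2) = c (n - 1) 2) (n : ℕ) :
    ∀ j, j % 2 = 0 → 1 ≤ j → j ≤ q - 1 → c n j = 0 := by
  induction n with
  | zero => exact fun j _ hj hjq => hc0 j hj (by omega)
  | succ n ih =>
    intro j hj h1 h2
    by_cases hjq : j ≤ q - 3
    · rw [hrec1 (n + 1) n.succ_pos j h1 hjq, Nat.add_sub_cancel]
      exact ih (j + 2) (by omega) (by omega) (by omega)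
    · rw [show j = q - 2 by omega, hrec2 (n + 1) n.succ_pos, Nat.add_sub_cancel]
      exact ih 2 rfl (by omega) (by omega)

theorem c_sub_one_eq (hqN : q % 2 = 0 ∧ 2 * N + 2 = q ∨ q % 2 = 1 ∧ N + 2 = q)
    (hc0 : ∀ j, 1 ≤ j → j ≤ q - 2 → c 0 j = 0)
    (hrec1 : ∀ n, 1 ≤ n → ∀ l, 1 ≤ l → l ≤ q - 3 → c n l = c (n - 1) (l + 2))
    (hrec2 : ∀ n, 1 ≤ n → c n (q - 2) = c (n - 1) 2)
    (hrec3 : ∀ n, 1 ≤ n → c n (q - 1) = c n 1 + σ (n + 1) - σ n) {m : ℕ} (hm : 1 ≤ m) :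
    c m (q - 1) = σ (m + 1) - σ m + if N ≤ m then c (m - N) (q - 1) else 0 := by
  have hc1 := c_chainIndex hqN hc0 hrec1 hrec2 le_rfl m
  rw [chainIndex_cycleLength hqN] at hc1
  rw [hrec3 m hm, hc1, delay]
  ring

end FaceCounts

noncomputable def faceWeight (q j : ℕ) : ℝ := ((q : ℝ) - 2 * j) / (2 * q)

theorem faceWeight_one (q : ℕ) : faceWeight q 1 = ((q : ℝ) - 2) / (2 * q) := by
  simp [faceWeight]

theorem faceWeight_sub_one (hq : 1 ≤ q) :
    faceWeight q (q - 1) = -(((q : ℝ) - 2) / (2 * q)) := by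
  rw [faceWeight, Nat.cast_sub hq]
  ring

/-- The exceptional `b ((N - 1) / 2)` for odd `q` comes from the wrap-around `2 ↦ q - 2`. -/
theorem faceWeight_chainIndex_succ_sub (hqN : q % 2 = 0 ∧ 2 * N + 2 = q ∨ q % 2 = 1 ∧ N + 2 = q)
    {b : ℕ → ℝ} (hb : ∀ l, l ≤ N - 1 →
      b l = if ¬ Even q ∧ l = (N - 1) / 2 then 4 / ((q : ℝ) - 2) - 2 else 4 / ((q : ℝ) - 2))
    {k : ℕ} (hk : k + 1 ≤ N) :
    faceWeight q (chainIndex q (k + 1)) - faceWeight q (chainIndex q k)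
      = ((q : ℝ) - 2) / (2 * q) * b k := by
  have hq : (3 : ℝ) ≤ q := by exact_mod_cast (show 3 ≤ q by omega)
  have hq0 : (q : ℝ) ≠ 0 := by positivity
  have hq2 : (q : ℝ) - 2 ≠ 0 := by linarith
  rw [hb k (by omega)]
  rcases chainIndex_succ hqN hk with ⟨h0, -, h⟩ | ⟨h1, h2⟩
  · rw [if_neg (by rw [← chainIndex_eq_two_iff hqN hk]; omega), h, faceWeight, faceWeight]
    push_cast
    field_simp
    ring
  · rw [if_pos ((chainIndex_eq_two_iff hqN hk).1 h2), h1, h2, faceWeight, faceWeight,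
      Nat.cast_sub (show 2 ≤ q by omega)]
    push_cast
    field_simp
    ring

noncomputable def weightedFaceSum (q : ℕ) (c : ℕ → ℕ → ℝ) (n : ℕ) : ℝ :=
  ∑ j ∈ Icc 1 (q - 1), faceWeight q j * c n j

section WeightedFaceSum

variable {σ : ℕ → ℝ} {c : ℕ → ℕ → ℝ}

theorem weightedFaceSum_zero (hq : 2 ≤ q) (hc0 : ∀ j, 1 ≤ j → j ≤ q - 2 → c 0 j = 0)
    (hc0' : c 0 (q - 1) = σ 1) :
    weightedFaceSum q c 0 = -(((q : ℝ) - 2) / (2 * q)) * σ 1 := by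
  rw [weightedFaceSum, sum_eq_single (q - 1), hc0', faceWeight_sub_one (by omega)]
  · intro j hj hjq
    rw [mem_Icc] at hj
    rw [hc0 j hj.1 (by omega), mul_zero]
  · intro h
    exact absurd (mem_Icc.2 ⟨by omega, le_rfl⟩) h

theorem weightedFaceSum_eq_sum_chainIndex
    (hqN : q % 2 = 0 ∧ 2 * N + 2 = q ∨ q % 2 = 1 ∧ N + 2 = q)
    (hc0 : ∀ j, 1 ≤ j → j ≤ q - 2 → c 0 j = 0)
    (hrec1 : ∀ n, 1 ≤ n → ∀ l, 1 ≤ l → l ≤ q - 3 → c n l = c (n - 1) (l + 2))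
    (hrec2 : ∀ n, 1 ≤ n → c n (q - 2) = c (n - 1) 2) (n : ℕ) :
    weightedFaceSum q c n = ∑ k ∈ range (N + 1),
      faceWeight q (chainIndex q k) * delay (fun m => c m (q - 1)) k n := by
  rw [weightedFaceSum, ← sum_subset (s₁ := (range (N + 1)).image (chainIndex q)),
    sum_image (chainIndex_injOn hqN)]
  · refine sum_congr rfl fun k hk => ?_
    rw [c_chainIndex hqN hc0 hrec1 hrec2 (Nat.lt_succ_iff.1 (mem_range.1 hk))]
  · intro j hj
    obtain ⟨k, hk, rfl⟩ := mem_image.1 hj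
    rw [mem_range] at hk
    rw [mem_Icc]
    rcases Nat.eq_zero_or_pos k with rfl | hk0
    · rw [chainIndex_zero]; omega
    · have := chainIndex_mem hqN hk0 (by omega); omega
  · intro j hj hjk
    rw [mem_Icc] at hj
    have hpar : q % 2 = 0 ∧ j % 2 = 0 := by
      by_contra hpar
      obtain ⟨k, hk, rfl⟩ := exists_chainIndex_eq hqN hj.1 hj.2 hpar
      exact hjk (mem_image_of_mem _ (mem_range.2 (by omega)))
    rw [c_eq_zero_of_even hpar.1 hc0 hrec1 hrec2 n j hpar.2 hj.1 hj.2, mul_zero]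

theorem sum_Icc_one_sub_one_eq {M : Type*} [AddCommMonoid M] (f : ℕ → M) (hq : 3 ≤ q) :
    ∑ j ∈ Icc 1 (q - 1), f j = f 1 + ∑ j ∈ Icc 2 (q - 2), f j + f (q - 1) := by
  obtain ⟨p, rfl⟩ : ∃ p, q = p + 3 := ⟨q - 3, by omega⟩
  rw [show p + 3 - 1 = p + 1 + 1 by omega, sum_Icc_succ_top (by omega),
    Icc_eq_cons_Ioc (by omega), sum_cons,
    show Ioc 1 (p + 1) = Icc 2 (p + 3 - 2) by ext; simp; omega]

theorem sum_range_eq_one_add_weightedFaceSum (hq : 3 ≤ q)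
    (hc0 : ∀ j, 1 ≤ j → j ≤ q - 2 → c 0 j = 0) (hc0' : c 0 (q - 1) = σ 1)
    (hrec3 : ∀ n, 1 ≤ n → c n (q - 1) = c n 1 + σ (n + 1) - σ n)
    {K : ℕ → ℝ} (hK0 : K 0 = 1 - (((q : ℝ) - 2) / (2 * q)) * σ 1)
    (hK : ∀ n, 1 ≤ n → ∑ l ∈ Finset.range (n + 1), K l
        = 1 - (((q : ℝ) - 2) / (2 * q)) * (σ (n + 1) - σ n)
          + ∑ j ∈ Finset.Icc 2 (q - 2), (((q : ℝ) - 2 * j) / (2 * q)) * c n j) (n : ℕ) :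
    ∑ l ∈ range (n + 1), K l = 1 + weightedFaceSum q c n := by
  rcases Nat.eq_zero_or_pos n with rfl | hn
  · rw [sum_range_one, hK0, weightedFaceSum_zero (by omega) hc0 hc0']
    ring
  · rw [hK n hn, weightedFaceSum, sum_Icc_one_sub_one_eq _ hq, hrec3 n hn, faceWeight_one,
      faceWeight_sub_one (by omega)]
    simp only [faceWeight]
    ring

end WeightedFaceSum

theorem weightedFaceSum_recursion {σ b : ℕ → ℝ} {c : ℕ → ℕ → ℝ} (hq : 3 ≤ q)
    (hqN : q % 2 = 0 ∧ 2 * N + 2 = q ∨ q % 2 = 1 ∧ N + 2 = q)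
    (hb : ∀ l, l ≤ N - 1 →
      b l = if ¬ Even q ∧ l = (N - 1) / 2 then 4 / ((q : ℝ) - 2) - 2 else 4 / ((q : ℝ) - 2))
    (hc0 : ∀ j, 1 ≤ j → j ≤ q - 2 → c 0 j = 0) (hc0' : c 0 (q - 1) = σ 1)
    (hrec1 : ∀ n, 1 ≤ n → ∀ l, 1 ≤ l → l ≤ q - 3 → c n l = c (n - 1) (l + 2))
    (hrec2 : ∀ n, 1 ≤ n → c n (q - 2) = c (n - 1) 2)
    (hrec3 : ∀ n, 1 ≤ n → c n (q - 1) = c n 1 + σ (n + 1) - σ n) (n : ℕ) :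
    ((q : ℝ) - 2) / (2 * q) * σ (n + 1)
        + (weightedFaceSum q c n - if N ≤ n then weightedFaceSum q c (n - N) else 0)
      = ∑ k ∈ range (min N n), ((q : ℝ) - 2) / (2 * q) * b k * σ (n - k)
        - ((q : ℝ) - 2) / (2 * q) * if N < n then σ (n - N) else 0 := by
  have hβ : ∀ k ∈ range N,
      (faceWeight q (chainIndex q (k + 1)) - faceWeight q (chainIndex q k))
          * delay (fun m => σ (m + 1)) (k + 1) n
        = ((q : ℝ) - 2) / (2 * q) * b k * delay (fun m => σ (m + 1)) (k + 1) n := fun k hk => by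
    rw [faceWeight_chainIndex_succ_sub hqN hb (mem_range.1 hk)]
  have htop : delay (fun m => σ (m + 1)) (N + 1) n = if N < n then σ (n - N) else 0 := by
    by_cases h : N < n
    · simp only [delay, if_pos h, if_pos (Nat.succ_le_of_lt h),
        show n - (N + 1) + 1 = n - N by omega]
    · simp only [delay, if_neg h, if_neg (show ¬ N + 1 ≤ n by omega)]
  have hN : 1 ≤ N := by omega
  simp only [weightedFaceSum_eq_sum_chainIndex hqN hc0 hrec1 hrec2]
  rw [sum_mul_delay_sub_eq hN hc0' (fun m hm => c_sub_one_eq hqN hc0 hrec1 hrec2 hrec3 hm),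
    chainIndex_zero, faceWeight_sub_one (show 1 ≤ q by omega), chainIndex_cycleLength hqN,
    faceWeight_one, sum_congr rfl hβ, sum_range_mul_delay_succ, htop]
  ring

theorem mul_sum_sub_eq {A : ℝ} {σ K κ' Φ b : ℕ → ℝ} (hκ' : ∀ m, A * κ' m = K m)
    (hΦ : ∀ m, ∑ l ∈ range (m + 1), K l = 1 + Φ m) {m n : ℕ} (hmn : m ≤ n) :
    A * ∑ l ∈ range m, (b l * σ (n - l) - κ' (n - l))
      = ∑ l ∈ range m, A * b l * σ (n - l) - (Φ n - Φ (n - m)) := by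
  have hK : ∑ l ∈ range m, K (n - l) = Φ n - Φ (n - m) := by
    rw [range_eq_Ico, sum_Ico_reflect _ _ (by omega), sum_Ico_eq_sub _ (by omega),
      Nat.sub_zero, show n + 1 - m = n - m + 1 by omega, hΦ, hΦ]
    ring
  simp only [mul_sum, mul_sub, hκ', sum_sub_distrib, hK, mul_assoc]

theorem cycleLength_spec (hq : 3 ≤ q) (hN : N = if Even q then (q - 2) / 2 else q - 2) :
    q % 2 = 0 ∧ 2 * N + 2 = q ∨ q % 2 = 1 ∧ N + 2 = q := by
  subst hN
  split_ifs with h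
  · rw [Nat.even_iff] at h; omega
  · rw [Nat.not_even_iff_odd, Nat.odd_iff] at h; omega

end GrowthRecursion

open GrowthRecursion

theorem growth_recursion_general (q : ℕ) (hq : 3 ≤ q)
    (N : ℕ) (hN : N = if Even q then (q - 2) / 2 else q - 2)
    (b : ℕ → ℝ)
    (hb : ∀ l, l ≤ N - 1 →
      b l = if ¬ Even q ∧ l = (N - 1) / 2 then 4 / ((q : ℝ) - 2) - 2 else 4 / ((q : ℝ) - 2))
    (σ : ℕ → ℝ)
    (c : ℕ → ℕ → ℝ)
    (hc0 : ∀ j, 1 ≤ j → j ≤ q - 2 → c 0 j = 0)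
    (hc0' : c 0 (q - 1) = σ 1)
    (hrec1 : ∀ n, 1 ≤ n → ∀ l, 1 ≤ l → l ≤ q - 3 → c n l = c (n - 1) (l + 2))
    (hrec2 : ∀ n, 1 ≤ n → c n (q - 2) = c (n - 1) 2)
    (hrec3 : ∀ n, 1 ≤ n → c n (q - 1) = c n 1 + σ (n + 1) - σ n)
    (K : ℕ → ℝ)
    (hK0 : K 0 = 1 - (((q : ℝ) - 2) / (2 * q)) * σ 1)
    (hK : ∀ n, 1 ≤ n → ∑ l ∈ Finset.range (n + 1), K l
        = 1 - (((q : ℝ) - 2) / (2 * q)) * (σ (n + 1) - σ n)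
          + ∑ j ∈ Finset.Icc 2 (q - 2), (((q : ℝ) - 2 * j) / (2 * q)) * c n j)
    (κ' : ℕ → ℝ) (hκ' : ∀ m, κ' m = (2 * (q : ℝ) / ((q : ℝ) - 2)) * K m)
    (n : ℕ) :
    (n < N → σ (n + 1) = σ 1 + ∑ l ∈ Finset.range n, (b l * σ (n - l) - κ' (n - l))) ∧
    (n = N → σ (N + 1) = ∑ l ∈ Finset.range N, (b l * σ (N - l) - κ' (N - l))) ∧
    (N < n → σ (n + 1) = -σ (n - N) + ∑ l ∈ Finset.range N, (b l * σ (n - l) - κ' (n - l))) := by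
  have hqN := cycleLength_spec hq hN
  have hq2 : (q : ℝ) - 2 ≠ 0 := by
    have : (3 : ℝ) ≤ q := by exact_mod_cast hq
    linarith
  have hA : ((q : ℝ) - 2) / (2 * q) ≠ 0 := div_ne_zero hq2 (by positivity)
  have hκ'K : ∀ m, ((q : ℝ) - 2) / (2 * q) * κ' m = K m := fun m => by
    rw [hκ' m]
    field_simp
  have hΦ := sum_range_eq_one_add_weightedFaceSum hq hc0 hc0' hrec3 hK0 hK
  have hΦ0 := weightedFaceSum_zero (by omega) hc0 hc0'
  have hrec := weightedFaceSum_recursion hq hqN hb hc0 hc0' hrec1 hrec2 hrec3 n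
  refine ⟨fun hnN => ?_, fun hnN => ?_, fun hnN => ?_⟩ <;> apply mul_left_cancel₀ hA
  · rw [if_neg (by omega), if_neg (by omega), min_eq_right hnN.le] at hrec
    rw [mul_add, mul_sum_sub_eq hκ'K hΦ le_rfl, Nat.sub_self, hΦ0]
    linarith
  · subst hnN
    rw [if_pos le_rfl, if_neg (lt_irrefl _), min_self, Nat.sub_self] at hrec
    rw [mul_sum_sub_eq hκ'K hΦ le_rfl, Nat.sub_self]
    linarith
  · rw [if_pos hnN.le, if_pos hnN, min_eq_left hnN.le] at hrec
    rw [mul_add, mul_sum_sub_eq hκ'K hΦ hnN.le]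
    linarith

/-- STATEMENT 10 (the paper's Theorem 2, growth recursion formulas), stated for abstract real
sequences: `σ n` are the sphere cardinalities, `c n j` satisfy the recurrences (i)–(iii) of the
face-counting quantities, `K n = κ(S_n)` satisfies equation (6.3) of [BP1] (taken here as a
hypothesis), and `κ' n = (2q/(q-2))·K n`.  Here `N = (q-2)/2` for `q` even and `N = q-2` for
`q` odd, and `b l = 4/(q-2)` except `b ((N-1)/2) = 4/(q-2) - 2` when `q` is odd. -/
theorem growth_recursion (q : ℕ) (hq : 3 ≤ q)
    (N : ℕ) (hN : N = if Even q then (q - 2) / 2 else q - 2)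
    (b : ℕ → ℝ)
    (hb : ∀ l, l ≤ N - 1 →
      b l = if ¬ Even q ∧ l = (N - 1) / 2 then 4 / ((q : ℝ) - 2) - 2 else 4 / ((q : ℝ) - 2))
    (σ : ℕ → ℝ) (hσ0 : σ 0 = 1)
    (c : ℕ → ℕ → ℝ)
    (hc0 : ∀ j, 1 ≤ j → j ≤ q - 2 → c 0 j = 0)
    (hc0' : c 0 (q - 1) = σ 1)
    (hrec1 : ∀ n, 1 ≤ n → ∀ l, 1 ≤ l → l ≤ q - 3 → c n l = c (n - 1) (l + 2))
    (hrec2 : ∀ n, 1 ≤ n → c n (q - 2) = c (n - 1) 2)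
    (hrec3 : ∀ n, 1 ≤ n → c n (q - 1) = c n 1 + σ (n + 1) - σ n)
    (K : ℕ → ℝ)
    (hK0 : K 0 = 1 - (((q : ℝ) - 2) / (2 * q)) * σ 1)
    (hK : ∀ n, 1 ≤ n → ∑ l ∈ Finset.range (n + 1), K l
        = 1 - (((q : ℝ) - 2) / (2 * q)) * (σ (n + 1) - σ n)
          + ∑ j ∈ Finset.Icc 2 (q - 2), (((q : ℝ) - 2 * j) / (2 * q)) * c n j)
    (κ' : ℕ → ℝ) (hκ' : ∀ m, κ' m = (2 * (q : ℝ) / ((q : ℝ) - 2)) * K m)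
    (n : ℕ) (hn : 1 ≤ n) :
    (n < N → σ (n + 1) = σ 1 + ∑ l ∈ Finset.range n, (b l * σ (n - l) - κ' (n - l))) ∧
    (n = N → σ (N + 1) = ∑ l ∈ Finset.range N, (b l * σ (N - l) - κ' (N - l))) ∧
    (N < n → σ (n + 1) = -σ (n - N) + ∑ l ∈ Finset.range N, (b l * σ (n - l) - κ' (n - l))) :=
  growth_recursion_general q hq N hN b hb σ c hc0 hc0' hrec1 hrec2 hrec3 K hK0 hK κ' hκ' n
end

section
/- Let q ≥ 3 be an integer, N = (q−2)/2 if q is even and N = q−2 if q is odd, and b_l (0 ≤ l ≤ N−1) as in the context. Let κ, κ̃ : ℕ → ℝ satisfy, for all n: κ̃_n ≤ κ_n ≤ 0, κ_n ≤ (6−q)/(q−2), and (if q = 5) κ_n ≤ −2/3. Let σ, σ̃ : ℕ → ℝ be nonnegative sequences with σ_0 = σ̃_0 = 1, σ_1 = 2q/(q−2) − κ_0, σ̃_1 = 2q/(q−2) − κ̃_0, and suppose that for all n ≥ 1: σ_{n+1} = σ_1 + Σ_{l=0}^{n−1}(b_l − κ_{n−l})σ_{n−l} if n < N, σ_{N+1}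 = Σ_{l=0}^{N−1}(b_l − κ_{N−l})σ_{N−l} if n = N, and σ_{n+1} = −σ_{n−N} + Σ_{l=0}^{N−1}(b_l − κ_{n−l})σ_{n−l} if n > N, and that σ̃ satisfies the same recursion with κ replaced by κ̃. Then the difference sequence γ_n = σ̃_n − σ_n is nonnegative and monotone non-decreasing: 0 ≤ γ_n ≤ γ_{n+1} for all n. In particular σ̃_n ≥ σ_n for all n. -/
/-!
Write `γ = σ' - σ`. Subtracting the two recursions and using `κ' ≤ κ ≤ K` and `σ' ≥ 0`, as long as
`γ ≥ 0` so far, `γ` satisfies the same recursion with `≥` in place of `=` and the constant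
coefficients `c_l = b_l - K`. If the partial sums of the `c_l` are at least `1` and their total is
at least `2`, Abel summation shows that a non-decreasing `γ` has `∑ c_l γ_{n-l} ≥ γ_n`, and
`≥ γ_n + γ_{n-N}` in the range `n > N`, so monotonicity propagates by induction. For the paper's
`b_l` the choice `K = 0` (`q = 3, 4`), `K = -2/3` (`q = 5`) or `K = (6 - q)/(q - 2)` (`q ≥ 6`)
gives the coefficients `(2)`, `(2, 0, 2)`, resp. all `1` except a single `-1` in the middle.
-/

open Finset

/-- The growth recursion of the paper's Theorem 2. -/
def GrowthRecursion (N : ℕ) (b κ σ : ℕ → ℝ) : Prop :=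
  ∀ n, 1 ≤ n →
    (n < N → σ (n + 1) = σ 1 + ∑ l ∈ range n, (b l - κ (n - l)) * σ (n - l)) ∧
    (n = N → σ (N + 1) = ∑ l ∈ range N, (b l - κ (N - l)) * σ (N - l)) ∧
    (N < n → σ (n + 1) = -σ (n - N) + ∑ l ∈ range N, (b l - κ (n - l)) * σ (n - l))

/-- Abel summation: `∑ c_l a_l = S_M a_{M-1} + ∑_{j < M-1} S_{j+1} (a_j - a_{j+1})`, where
`S_j = ∑_{l < j} c_l`. -/
theorem add_sub_one_mul_le_sum_mul (c a : ℕ → ℝ) (M : ℕ)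
    (hc : ∀ j, 0 < j → j < M → 1 ≤ ∑ l ∈ range j, c l)
    (ha : ∀ j, j + 1 < M → a (j + 1) ≤ a j) :
    a 0 + (∑ l ∈ range M, c l - 1) * a (M - 1) ≤ ∑ l ∈ range M, c l * a l := by
  induction M with
  | zero => simp
  | succ M ih =>
    have ih := ih (fun j hj hjM => hc j hj (by omega)) (fun j hj => ha j (by omega))
    have hstep : 0 ≤ (∑ l ∈ range M, c l - 1) * (a (M - 1) - a M) := by
      rcases M with _ | M
      · simp
      · exact mul_nonneg (sub_nonneg.2 (hc _ M.succ_pos (by omega))) (sub_nonneg.2 (ha M (by omega)))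
    rw [sum_range_succ, sum_range_succ, Nat.add_sub_cancel]
    linarith

theorem sum_sub_mul_sub_le {b κ κ' σ σ' : ℕ → ℝ} {K : ℝ} {n : ℕ}
    (hκK : ∀ m, κ m ≤ K) (hκκ' : ∀ m, κ' m ≤ κ m) (hσ' : ∀ m, 0 ≤ σ' m)
    (hσσ' : ∀ m ≤ n, σ m ≤ σ' m) (w : ℕ) :
    ∑ l ∈ range w, (b l - K) * (σ' (n - l) - σ (n - l)) ≤
      ∑ l ∈ range w, (b l - κ' (n - l)) * σ' (n - l) -
        ∑ l ∈ range w, (b l - κ (n - l)) * σ (n - l) := by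
  rw [← sum_sub_distrib]
  refine sum_le_sum fun l _ => ?_
  -- `(b - κ') σ' - (b - κ) σ = (b - κ) (σ' - σ) + (κ - κ') σ'`
  nlinarith [hκK (n - l), hκκ' (n - l), hσ' (n - l), hσσ' (n - l) (Nat.sub_le n l)]

theorem GrowthRecursion.sub_le_sub_succ {N : ℕ} {b κ κ' σ σ' : ℕ → ℝ} {K : ℝ}
    (hrec : GrowthRecursion N b κ σ) (hrec' : GrowthRecursion N b κ' σ')
    (hcoef : ∀ j, 0 < j → j ≤ N → 1 ≤ ∑ l ∈ range j, (b l - K))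
    (hcoefN : 2 ≤ ∑ l ∈ range N, (b l - K))
    (hκK : ∀ n, κ n ≤ K) (hκκ' : ∀ n, κ' n ≤ κ n) (hσ' : ∀ n, 0 ≤ σ' n) (h1 : σ 1 ≤ σ' 1)
    {n : ℕ} (hn : 1 ≤ n) (hσσ' : ∀ m ≤ n, σ m ≤ σ' m)
    (hstep : ∀ m < n, σ' m - σ m ≤ σ' (m + 1) - σ (m + 1)) :
    σ' n - σ n ≤ σ' (n + 1) - σ (n + 1) := by
  have abel : ∀ M ≤ min n N,
      σ' n - σ n + (∑ l ∈ range M, (b l - K) - 1) * (σ' (n - (M - 1)) - σ (n - (M - 1))) ≤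
        ∑ l ∈ range M, (b l - K) * (σ' (n - l) - σ (n - l)) := fun M hM =>
    add_sub_one_mul_le_sum_mul (fun l => b l - K) (fun l => σ' (n - l) - σ (n - l)) M
      (fun j hj hjM => hcoef j hj (by omega)) fun j hj => by
        have := hstep (n - (j + 1)) (by omega)
        rwa [show n - (j + 1) + 1 = n - j by omega] at this
  have hsum := sum_sub_mul_sub_le (b := b) hκK hκκ' hσ' hσσ'
  obtain ⟨hlt, heq, hgt⟩ := hrec n hn
  obtain ⟨hlt', heq', hgt'⟩ := hrec' n hn
  rcases le_or_gt n N with hnN | hnN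
  · have hdom : σ' n - σ n ≤ ∑ l ∈ range n, (b l - K) * (σ' (n - l) - σ (n - l)) := by
      have habel := abel n (by omega)
      rw [show n - (n - 1) = 1 by omega] at habel
      have := mul_nonneg (sub_nonneg.2 (hcoef n (by omega) hnN)) (sub_nonneg.2 h1)
      linarith
    rcases hnN.lt_or_eq with hnN | rfl
    · rw [hlt hnN, hlt' hnN]
      linarith [hsum n, sub_nonneg.2 h1]
    · rw [heq rfl, heq' rfl]
      linarith [hsum n]
  · have habel := abel N (by omega)
    have hlast : σ' (n - N) - σ (n - N) ≤ σ' (n - (N - 1)) - σ (n - (N - 1)) := by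
      rcases Nat.eq_zero_or_pos N with hN0 | hN0
      · simp [hN0]
      · have := hstep (n - N) (by omega)
        rwa [show n - N + 1 = n - (N - 1) by omega] at this
    have := mul_nonneg (sub_nonneg.2 hcoefN) (sub_nonneg.2 (hσσ' (n - (N - 1)) (by omega)))
    rw [hgt hnN, hgt' hnN]
    linarith [hsum N]

theorem GrowthRecursion.sub_nonneg_and_le_succ {N : ℕ} {b κ κ' σ σ' : ℕ → ℝ} {K : ℝ}
    (hrec : GrowthRecursion N b κ σ) (hrec' : GrowthRecursion N b κ' σ')
    (hcoef : ∀ j, 0 < j → j ≤ N → 1 ≤ ∑ l ∈ range j, (b l - K))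
    (hcoefN : 2 ≤ ∑ l ∈ range N, (b l - K))
    (hκK : ∀ n, κ n ≤ K) (hκκ' : ∀ n, κ' n ≤ κ n) (hσ' : ∀ n, 0 ≤ σ' n)
    (h0 : σ 0 = σ' 0) (h1 : σ 1 ≤ σ' 1) (n : ℕ) :
    0 ≤ σ' n - σ n ∧ σ' n - σ n ≤ σ' (n + 1) - σ (n + 1) := by
  induction n using Nat.strong_induction_on with
  | _ n ih =>
    have hnonneg : ∀ m ≤ n, σ m ≤ σ' m := fun m hm => by
      rcases Nat.eq_zero_or_pos m with rfl | hm0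
      · exact h0.le
      · have := ih (m - 1) (by omega)
        rw [Nat.sub_add_cancel hm0] at this
        linarith
    refine ⟨sub_nonneg.2 (hnonneg n le_rfl), ?_⟩
    rcases Nat.eq_zero_or_pos n with rfl | hn
    · linarith
    · exact hrec.sub_le_sub_succ hrec' hcoef hcoefN hκK hκκ' hσ' h1 hn hnonneg
        fun m hm => (ih m hm).2

theorem sum_range_coeff_sub_eq {q N : ℕ} {b : ℕ → ℝ}
    (hb : ∀ l, l ≤ N - 1 →
      b l = if ¬ Even q ∧ l = (N - 1) / 2 then 4 / ((q : ℝ) - 2) - 2 else 4 / ((q : ℝ) - 2))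
    (K : ℝ) {j : ℕ} (hj : j ≤ N) :
    ∑ l ∈ range j, (b l - K) =
      (4 / ((q : ℝ) - 2) - K) * j - if ¬ Even q ∧ (N - 1) / 2 < j then 2 else 0 := by
  have hterm : ∀ l ∈ range j, b l - K =
      (4 / ((q : ℝ) - 2) - K) - if ¬ Even q ∧ l = (N - 1) / 2 then 2 else 0 := by
    intro l hl
    rw [hb l (by rw [mem_range] at hl; omega)]
    split_ifs <;> ring
  rw [sum_congr rfl hterm, sum_sub_distrib, sum_const, card_range, nsmul_eq_mul, mul_comm]
  by_cases hq : Even q <;> simp [hq]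

theorem exists_curvature_bound_one_le_partial_sums {q N : ℕ} (hq : 3 ≤ q)
    (hN : N = if Even q then (q - 2) / 2 else q - 2) {b κ : ℕ → ℝ}
    (hb : ∀ l, l ≤ N - 1 →
      b l = if ¬ Even q ∧ l = (N - 1) / 2 then 4 / ((q : ℝ) - 2) - 2 else 4 / ((q : ℝ) - 2))
    (hκ0 : ∀ n, κ n ≤ 0) (hκb : ∀ n, κ n ≤ (6 - (q : ℝ)) / ((q : ℝ) - 2))
    (hκ5 : q = 5 → ∀ n, κ n ≤ -2 / 3) :
    ∃ K : ℝ, (∀ n, κ n ≤ K) ∧ (∀ j, 0 < j → j ≤ N → 1 ≤ ∑ l ∈ range j, (b l - K)) ∧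
      2 ≤ ∑ l ∈ range N, (b l - K) := by
  rcases (by omega : q ≤ 4 ∨ q = 5 ∨ 6 ≤ q) with hq4 | rfl | hq6
  · have hN1 : N = 1 := by interval_cases q <;> simp [Nat.even_iff] at hN <;> omega
    subst hN1
    have hsum : ∑ l ∈ range 1, (b l - 0) = 2 := by
      rw [sum_range_coeff_sub_eq hb 0 le_rfl]
      interval_cases q <;> norm_num [Nat.even_iff]
    refine ⟨0, hκ0, fun j hj hjN => ?_, hsum.ge⟩
    obtain rfl : j = 1 := by omega
    exact hsum ▸ one_le_two
  · have hN3 : N = 3 := by simp [Nat.even_iff] at hN; omega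
    subst hN3
    refine ⟨-2 / 3, hκ5 rfl, fun j hj hjN => ?_, ?_⟩
    · rw [sum_range_coeff_sub_eq hb _ hjN]
      interval_cases j <;> norm_num [Nat.even_iff]
    · rw [sum_range_coeff_sub_eq hb _ le_rfl]
      norm_num [Nat.even_iff]
  · have hq2 : (q : ℝ) - 2 ≠ 0 := by
      have : (6 : ℝ) ≤ q := by exact_mod_cast hq6
      linarith
    have hs : 4 / ((q : ℝ) - 2) - (6 - q) / (q - 2) = 1 := by
      field_simp; ring
    have hN_odd : ¬ Even q → 5 ≤ N ∧ 2 ≤ (N - 1) / 2 := fun hodd => by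
      have := Nat.odd_iff.mp (Nat.not_even_iff_odd.mp hodd)
      rw [if_neg hodd] at hN
      omega
    have hN2 : 2 ≤ N := by split_ifs at hN <;> omega
    refine ⟨_, hκb, fun j hj hjN => ?_, ?_⟩
    · rw [sum_range_coeff_sub_eq hb _ hjN, hs, one_mul]
      split_ifs with h
      · have : (3 : ℝ) ≤ j := by exact_mod_cast (by have := hN_odd h.1; omega : 3 ≤ j)
        linarith
      · have : (1 : ℝ) ≤ j := by exact_mod_cast hj
        linarith
    · rw [sum_range_coeff_sub_eq hb _ le_rfl, hs, one_mul]
      split_ifs with h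
      · have : (4 : ℝ) ≤ N := by exact_mod_cast (by have := hN_odd h.1; omega : 4 ≤ N)
        linarith
      · have : (2 : ℝ) ≤ N := by exact_mod_cast hN2
        linarith

theorem curvature_growth_comparison_general (q : ℕ) (hq : 3 ≤ q)
    (N : ℕ) (hN : N = if Even q then (q - 2) / 2 else q - 2)
    (b : ℕ → ℝ)
    (hb : ∀ l, l ≤ N - 1 →
      b l = if ¬ Even q ∧ l = (N - 1) / 2 then 4 / ((q : ℝ) - 2) - 2 else 4 / ((q : ℝ) - 2))
    (κ κ' : ℕ → ℝ)
    (hκκ' : ∀ n, κ' n ≤ κ n) (hκ0 : ∀ n, κ n ≤ 0)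
    (hκb : ∀ n, κ n ≤ (6 - (q : ℝ)) / ((q : ℝ) - 2))
    (hκ5 : q = 5 → ∀ n, κ n ≤ -2 / 3)
    (σ σ' : ℕ → ℝ)
    (hσ'nn : ∀ n, 0 ≤ σ' n)
    (hσ0 : σ 0 = 1) (hσ'0 : σ' 0 = 1)
    (hσ1 : σ 1 = 2 * (q : ℝ) / ((q : ℝ) - 2) - κ 0)
    (hσ'1 : σ' 1 = 2 * (q : ℝ) / ((q : ℝ) - 2) - κ' 0)
    (hrec : ∀ n, 1 ≤ n →
      (n < N → σ (n + 1) = σ 1 + ∑ l ∈ Finset.range n, (b l - κ (n - l)) * σ (n - l)) ∧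
      (n = N → σ (N + 1) = ∑ l ∈ Finset.range N, (b l - κ (N - l)) * σ (N - l)) ∧
      (N < n → σ (n + 1) = -σ (n - N) + ∑ l ∈ Finset.range N, (b l - κ (n - l)) * σ (n - l)))
    (hrec' : ∀ n, 1 ≤ n →
      (n < N → σ' (n + 1) = σ' 1 + ∑ l ∈ Finset.range n, (b l - κ' (n - l)) * σ' (n - l)) ∧
      (n = N → σ' (N + 1) = ∑ l ∈ Finset.range N, (b l - κ' (N - l)) * σ' (N - l)) ∧
      (N < n → σ' (n + 1) = -σ' (n - N) + ∑ l ∈ Finset.range N, (b l - κ' (n - l)) * σ' (n - l))) :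
    ∀ n, 0 ≤ σ' n - σ n ∧ σ' n - σ n ≤ σ' (n + 1) - σ (n + 1) := by
  obtain ⟨K, hκK, hcoef, hcoefN⟩ := exists_curvature_bound_one_le_partial_sums hq hN hb hκ0 hκb hκ5
  have h1 : σ 1 ≤ σ' 1 := by rw [hσ1, hσ'1]; linarith [hκκ' 0]
  exact GrowthRecursion.sub_nonneg_and_le_succ (N := N) hrec hrec' hcoef hcoefN hκK hκκ' hσ'nn
    (hσ0.trans hσ'0.symm) h1

/-- STATEMENT 11 (the paper's Theorem 3, curvature/growth comparison), stated for abstract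
sequences: `σ, σ'` are the sphere-cardinality sequences of two `q`-face regular plane
tessellations with non-positive vertex curvature, `κ, κ'` are the corresponding normalized
average spherical curvatures (satisfying `κ' n ≤ κ n ≤ 0` and the bounds expressing vertex
degrees ≥ 3 and non-positive vertex curvature), and both satisfy the growth recursion of the
paper's Theorem 2.  Conclusion: `γ n = σ' n - σ n` is nonnegative and monotone non-decreasing;
in particular `σ' n ≥ σ n` for all `n`. -/
theorem curvature_growth_comparison (q : ℕ) (hq : 3 ≤ q)
    (N : ℕ) (hN : N = if Even q then (q - 2) / 2 else q - 2)
    (b : ℕ → ℝ)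
    (hb : ∀ l, l ≤ N - 1 →
      b l = if ¬ Even q ∧ l = (N - 1) / 2 then 4 / ((q : ℝ) - 2) - 2 else 4 / ((q : ℝ) - 2))
    (κ κ' : ℕ → ℝ)
    (hκκ' : ∀ n, κ' n ≤ κ n) (hκ0 : ∀ n, κ n ≤ 0)
    (hκb : ∀ n, κ n ≤ (6 - (q : ℝ)) / ((q : ℝ) - 2))
    (hκ5 : q = 5 → ∀ n, κ n ≤ -2 / 3)
    (σ σ' : ℕ → ℝ)
    (hσnn : ∀ n, 0 ≤ σ n) (hσ'nn : ∀ n, 0 ≤ σ' n)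
    (hσ0 : σ 0 = 1) (hσ'0 : σ' 0 = 1)
    (hσ1 : σ 1 = 2 * (q : ℝ) / ((q : ℝ) - 2) - κ 0)
    (hσ'1 : σ' 1 = 2 * (q : ℝ) / ((q : ℝ) - 2) - κ' 0)
    (hrec : ∀ n, 1 ≤ n →
      (n < N → σ (n + 1) = σ 1 + ∑ l ∈ Finset.range n, (b l - κ (n - l)) * σ (n - l)) ∧
      (n = N → σ (N + 1) = ∑ l ∈ Finset.range N, (b l - κ (N - l)) * σ (N - l)) ∧
      (N < n → σ (n + 1) = -σ (n - N) + ∑ l ∈ Finset.range N, (b l - κ (n - l)) * σ (n - l)))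
    (hrec' : ∀ n, 1 ≤ n →
      (n < N → σ' (n + 1) = σ' 1 + ∑ l ∈ Finset.range n, (b l - κ' (n - l)) * σ' (n - l)) ∧
      (n = N → σ' (N + 1) = ∑ l ∈ Finset.range N, (b l - κ' (N - l)) * σ' (N - l)) ∧
      (N < n → σ' (n + 1) = -σ' (n - N) + ∑ l ∈ Finset.range N, (b l - κ' (n - l)) * σ' (n - l))) :
    ∀ n, 0 ≤ σ' n - σ n ∧ σ' n - σ n ≤ σ' (n + 1) - σ (n + 1) :=
  curvature_growth_comparison_general q hq N hN b hb κ κ' hκκ' hκ0 hκb hκ5 σ σ' hσ'nn hσ0 hσ'0 hσ1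
    hσ'1 hrec hrec'
end

section
/- Let q ≥ 3 be an integer, N = (q−2)/2 if q is even and N = q−2 if q is odd (assume N ≥ 1), and b_l (0 ≤ l ≤ N−1) as in the context. Let n ≥ 1 and 1 ≤ k ≤ min(n, N). Let κ : ℕ → ℝ be such that for every l with 1 ≤ l ≤ k−1: b_l − κ_{n−l} ≥ 1 if l ≠ (N−1)/2 or q is even, b_l − κ_{n−l} ≥ 0 if q = 5 and l = (N−1)/2, and b_l − κ_{n−l} ≥ −1 if q ≥ 7 is odd and l = (N−1)/2. Let γ : ℕ → ℝ be such that γ_i ≥ 0 for n−k+1 ≤ i ≤ n−1 and γ is monotone non-decreasing on these indices (γ_i ≤ γ_j whenever n−k+1 ≤ i ≤ j ≤ n−1). Then Σ_{l=1}^{k−1} (b_l − κ_{n−l})·γ_{n−l} ≥ 0. -/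
/-!
Every coefficient `b l - κ (n - l)` is at least `1`, except at the middle index `l₀ = (N - 1) / 2`
for odd `q`. For `q = 5` that coefficient is still nonnegative, so the sum is termwise
nonnegative. For odd `q ≥ 7` it may be as small as `-1`; since `l₀ ≥ 2`, the index `l₀ - 1` also
occurs, its coefficient is at least `1`, and its weight `γ (n - l₀ + 1)` dominates `γ (n - l₀)`,
so this pair of terms is nonnegative.
-/

theorem Finset.sum_mul_nonneg_of_compensating_pair {ι : Type*} [DecidableEq ι] {s : Finset ι}
    {c g : ι → ℝ} {i j : ι} (hi : i ∈ s) (hj : j ∈ s) (hij : i ≠ j)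
    (hg : ∀ l ∈ s, 0 ≤ g l) (hc : ∀ l ∈ s, l ≠ j → 0 ≤ c l)
    (hci : 1 ≤ c i) (hcj : -1 ≤ c j) (hgji : g j ≤ g i) :
    0 ≤ ∑ l ∈ s, c l * g l := by
  have hsub : {i, j} ⊆ s := Finset.insert_subset hi (Finset.singleton_subset_iff.mpr hj)
  rw [← Finset.sum_sdiff hsub, Finset.sum_pair hij]
  have hrest : 0 ≤ ∑ l ∈ s \ {i, j}, c l * g l := by
    refine Finset.sum_nonneg fun l hl => ?_
    simp only [Finset.mem_sdiff, Finset.mem_insert, Finset.mem_singleton, not_or] at hl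
    exact mul_nonneg (hc l hl.1 hl.2.2) (hg l hl.1)
  have hterm_i : g i ≤ c i * g i := le_mul_of_one_le_left (hg i hi) hci
  have hterm_j : -g j ≤ c j * g j := by
    simpa using mul_le_mul_of_nonneg_right hcj (hg j hj)
  linarith

theorem eq_five_of_not_even_of_lt_seven {q : ℕ} (hodd : ¬Even q) (hq7 : q < 7)
    (hmid : 1 ≤ (q - 2 - 1) / 2) : q = 5 := by
  have := Nat.odd_iff.mp (Nat.not_even_iff_odd.mp hodd)
  omega

theorem sum_b_minus_kappa_gamma_nonneg_general (q : ℕ)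
    (N : ℕ) (hN : N = if Even q then (q - 2) / 2 else q - 2)
    (b : ℕ → ℝ)
    (n k : ℕ) (hk : k ≤ min n N)
    (κ : ℕ → ℝ)
    (hκ : ∀ l, 1 ≤ l → l ≤ k - 1 →
      ((Even q ∨ l ≠ (N - 1) / 2) → 1 ≤ b l - κ (n - l)) ∧
      (q = 5 → l = (N - 1) / 2 → 0 ≤ b l - κ (n - l)) ∧
      (¬ Even q → 7 ≤ q → l = (N - 1) / 2 → -1 ≤ b l - κ (n - l)))
    (γ : ℕ → ℝ)
    (hγ0 : ∀ i, n - k + 1 ≤ i → i ≤ n - 1 → 0 ≤ γ i)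
    (hγmono : ∀ i j, n - k + 1 ≤ i → i ≤ j → j ≤ n - 1 → γ i ≤ γ j) :
    0 ≤ ∑ l ∈ Finset.Icc 1 (k - 1), (b l - κ (n - l)) * γ (n - l) := by
  have hkn : k ≤ n := hk.trans (min_le_left _ _)
  have hγ : ∀ l ∈ Finset.Icc 1 (k - 1), 0 ≤ γ (n - l) := fun l hl => by
    rw [Finset.mem_Icc] at hl
    exact hγ0 _ (by omega) (by omega)
  by_cases hspecial : ¬Even q ∧ 7 ≤ q ∧ (N - 1) / 2 ∈ Finset.Icc 1 (k - 1)
  · obtain ⟨hodd, hq7, hmid⟩ := hspecial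
    have hNq : N = q - 2 := by simp [hN, hodd]
    have hmid' := Finset.mem_Icc.mp hmid
    refine Finset.sum_mul_nonneg_of_compensating_pair (i := (N - 1) / 2 - 1) (j := (N - 1) / 2)
      (Finset.mem_Icc.mpr (by omega)) hmid (by omega) hγ (fun l hl hlj => ?_)
      ((hκ _ (by omega) (by omega)).1 (Or.inr (by omega)))
      ((hκ _ hmid'.1 hmid'.2).2.2 hodd hq7 rfl) (hγmono _ _ (by omega) (by omega) (by omega))
    rw [Finset.mem_Icc] at hl
    linarith [(hκ l hl.1 hl.2).1 (Or.inr hlj)]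
  · refine Finset.sum_nonneg fun l hl => mul_nonneg ?_ (hγ l hl)
    rw [Finset.mem_Icc] at hl
    by_cases hgeneric : Even q ∨ l ≠ (N - 1) / 2
    · linarith [(hκ l hl.1 hl.2).1 hgeneric]
    · rw [not_or, not_not] at hgeneric
      obtain ⟨hodd, rfl⟩ := hgeneric
      have hNq : N = q - 2 := by simp [hN, hodd]
      have hq5 : q = 5 := eq_five_of_not_even_of_lt_seven hodd
        (not_le.mp fun hq7 => hspecial ⟨hodd, hq7, Finset.mem_Icc.mpr hl⟩) (by omega)
      exact (hκ _ hl.1 hl.2).2.1 hq5 rfl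

/-- STATEMENT 13 (the paper's Lemma 4.2(d)), with the curvature bounds of Lemma 4.1 taken as
explicit hypotheses.  Here `N = (q-2)/2` for `q` even and `N = q-2` for `q` odd (`N ≥ 1`), and
`b l = 4/(q-2)` except `b ((N-1)/2) = 4/(q-2) - 2` when `q` is odd. -/
theorem sum_b_minus_kappa_gamma_nonneg (q : ℕ) (hq : 3 ≤ q)
    (N : ℕ) (hN : N = if Even q then (q - 2) / 2 else q - 2) (hN1 : 1 ≤ N)
    (b : ℕ → ℝ)
    (hb : ∀ l, l ≤ N - 1 →
      b l = if ¬ Even q ∧ l = (N - 1) / 2 then 4 / ((q : ℝ) - 2) - 2 else 4 / ((q : ℝ) - 2))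
    (n k : ℕ) (hn : 1 ≤ n) (hk1 : 1 ≤ k) (hk : k ≤ min n N)
    (κ : ℕ → ℝ)
    (hκ : ∀ l, 1 ≤ l → l ≤ k - 1 →
      ((Even q ∨ l ≠ (N - 1) / 2) → 1 ≤ b l - κ (n - l)) ∧
      (q = 5 → l = (N - 1) / 2 → 0 ≤ b l - κ (n - l)) ∧
      (¬ Even q → 7 ≤ q → l = (N - 1) / 2 → -1 ≤ b l - κ (n - l)))
    (γ : ℕ → ℝ)
    (hγ0 : ∀ i, n - k + 1 ≤ i → i ≤ n - 1 → 0 ≤ γ i)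
    (hγmono : ∀ i j, n - k + 1 ≤ i → i ≤ j → j ≤ n - 1 → γ i ≤ γ j) :
    0 ≤ ∑ l ∈ Finset.Icc 1 (k - 1), (b l - κ (n - l)) * γ (n - l) :=
  sum_b_minus_kappa_gamma_nonneg_general q N hN b n k hk κ hκ γ hγ0 hγmono
end

section
/- Let p, q be integers with p, q ≥ 3, q even, and 1/p + 1/q ≤ 1/2, and set N = (q−2)/2. Define σ : ℕ → ℤ by σ_0 = 1, σ_1 = p, and for n ≥ 1: σ_{n+1} = σ_1 + (p−2)·Σ_{l=0}^{n−1} σ_{n−l} if n < N; σ_{N+1} = (p−2)·Σ_{l=0}^{N−1} σ_{N−l}; σ_{n+1} = −σ_{n−N} + (p−2)·Σ_{l=0}^{N−1} σ_{n−l} if n > N. Then in the ring of formal power series ℤ[[z]], g_{p,q}(z)·(Σ_{n=0}^∞ σ_n z^n) = h_{p,q}(z), where g_{p,q}(z) = 1 − (p−2)z − (p−2)z² − ⋯ − (p−2)z^N + z^{N+1} and h_{p,q}(z) = 1 + 2z + 2z² + ⋯ + 2z^N + z^{N+1}. -/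
/-!
Compare coefficients of `z^m`. For `1 ≤ m ≤ N` the product has coefficient
`σ_m - (p-2)(σ_0 + ⋯ + σ_{m-1})`, which the first recursion keeps equal to its value
`σ_1 - (p-2)σ_0 = 2` at `m = 1`. At `m = N + 1` the second recursion lacks the `σ_1` term, so only
the `σ_0 = 1` contributed by `z^(N+1)` survives, and for larger `m` the third recursion says
exactly that the coefficient vanishes.
-/

open PowerSeries Finset

namespace PowerSeries

variable {R : Type*} [CommRing R]

/-- `1 + c z + ⋯ + c z^N + z^(N+1)`; `g_{p,q}` and `h_{p,q}` are the cases `c = -(p-2)` and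
`c = 2`. -/
def palindromicSeries (N : ℕ) (c : R) : R⟦X⟧ :=
  mk fun k => if k = 0 ∨ k = N + 1 then 1 else if k ≤ N then c else 0

section palindromicSeries

variable {N : ℕ} {c : R}

@[simp]
theorem coeff_zero_palindromicSeries : coeff 0 (palindromicSeries N c) = 1 := by
  simp [palindromicSeries]

@[simp]
theorem coeff_add_one_palindromicSeries : coeff (N + 1) (palindromicSeries N c) = 1 := by
  simp [palindromicSeries]

theorem coeff_palindromicSeries_of_pos_of_le {k : ℕ} (h0 : 0 < k) (hN : k ≤ N) :
    coeff k (palindromicSeries N c) = c := by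
  simp only [palindromicSeries, coeff_mk, if_neg (show ¬(k = 0 ∨ k = N + 1) by omega), if_pos hN]

theorem coeff_palindromicSeries_of_lt {k : ℕ} (h : N + 1 < k) :
    coeff k (palindromicSeries N c) = 0 := by
  simp only [palindromicSeries, coeff_mk, if_neg (show ¬(k = 0 ∨ k = N + 1) by omega),
    if_neg (show ¬k ≤ N by omega)]

theorem sum_range_coeff_succ_palindromicSeries_mul {n : ℕ} (hn : n ≤ N) (m : ℕ) (f : R⟦X⟧) :
    ∑ k ∈ range n, coeff (k + 1) (palindromicSeries N c) * coeff (m - (k + 1)) f =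
      c * ∑ k ∈ range n, coeff (m - 1 - k) f := by
  rw [mul_sum]
  refine sum_congr rfl fun k hk => ?_
  rw [coeff_palindromicSeries_of_pos_of_le k.succ_pos (by rw [mem_range] at hk; omega),
    Nat.sub_sub, add_comm 1 k]

theorem coeff_palindromicSeries_mul_of_le {m : ℕ} (hm : m ≤ N) (f : R⟦X⟧) :
    coeff m (palindromicSeries N c * f) =
      coeff m f + c * ∑ k ∈ range m, coeff (m - 1 - k) f := by
  rw [coeff_mul, Nat.sum_antidiagonal_eq_sum_range_succ_mk, sum_range_succ',
    sum_range_coeff_succ_palindromicSeries_mul hm, coeff_zero_palindromicSeries, one_mul,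
    Nat.sub_zero, add_comm]

theorem coeff_palindromicSeries_mul_of_lt {m : ℕ} (hm : N < m) (f : R⟦X⟧) :
    coeff m (palindromicSeries N c * f) =
      coeff m f + c * ∑ k ∈ range N, coeff (m - 1 - k) f + coeff (m - (N + 1)) f := by
  have hvanish : ∀ k ∈ range (m + 1), k ∉ range (N + 2) →
      coeff k (palindromicSeries N c) * coeff (m - k) f = 0 := fun k _ hk => by
    rw [coeff_palindromicSeries_of_lt (by simp only [mem_range] at hk; omega), zero_mul]
  rw [coeff_mul, Nat.sum_antidiagonal_eq_sum_range_succ_mk,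
    ← sum_subset (range_subset_range.mpr (by omega)) hvanish, sum_range_succ, sum_range_succ',
    sum_range_coeff_succ_palindromicSeries_mul le_rfl, coeff_zero_palindromicSeries,
    coeff_add_one_palindromicSeries, one_mul, one_mul, Nat.sub_zero, add_comm (_ * _)]

end palindromicSeries

theorem palindromicSeries_mul_mk_of_rec {N : ℕ} (hN : 1 ≤ N) {a : R}
    {σ : ℕ → R} (hσ0 : σ 0 = 1) (hσ1 : σ 1 = a + 2)
    (hrec1 : ∀ n, 1 ≤ n → n < N → σ (n + 1) = σ 1 + a * ∑ l ∈ range n, σ (n - l))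
    (hrec2 : σ (N + 1) = a * ∑ l ∈ range N, σ (N - l))
    (hrec3 : ∀ n, N < n → σ (n + 1) = -σ (n - N) + a * ∑ l ∈ range N, σ (n - l)) :
    palindromicSeries N (-a) * mk σ = palindromicSeries N 2 := by
  ext m
  rcases m with _ | m
  · simp [coeff_palindromicSeries_mul_of_le (Nat.zero_le N), hσ0]
  rcases lt_trichotomy m N with hm | rfl | hm
  · have hσ : σ (m + 1) = σ 1 + a * ∑ l ∈ range m, σ (m - l) := by
      rcases m.eq_zero_or_pos with rfl | hm0
      · simp
      · exact hrec1 m hm0 hm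
    rw [coeff_palindromicSeries_mul_of_le hm, coeff_palindromicSeries_of_pos_of_le m.succ_pos hm]
    simp only [coeff_mk, Nat.succ_sub_one, sum_range_succ, Nat.sub_self, hσ, hσ0, hσ1]
    ring
  · rw [coeff_palindromicSeries_mul_of_lt (lt_add_one _), coeff_add_one_palindromicSeries]
    simp only [coeff_mk, Nat.add_sub_cancel, Nat.sub_self, hrec2, hσ0]
    ring
  · rw [coeff_palindromicSeries_mul_of_lt (by omega), coeff_palindromicSeries_of_lt (by omega)]
    simp only [coeff_mk, Nat.add_sub_cancel, Nat.add_sub_add_right, hrec3 m hm]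
    ring

end PowerSeries

theorem growth_series_even_general (p q : ℕ) (hq : 3 ≤ q) (hqe : Even q)
    (N : ℕ) (hN : N = (q - 2) / 2)
    (σ : ℕ → ℤ) (hσ0 : σ 0 = 1) (hσ1 : σ 1 = p)
    (hrec1 : ∀ n, 1 ≤ n → n < N →
      σ (n + 1) = σ 1 + ((p : ℤ) - 2) * ∑ l ∈ Finset.range n, σ (n - l))
    (hrec2 : 1 ≤ N → σ (N + 1) = ((p : ℤ) - 2) * ∑ l ∈ Finset.range N, σ (N - l))
    (hrec3 : ∀ n, N < n →
      σ (n + 1) = -σ (n - N) + ((p : ℤ) - 2) * ∑ l ∈ Finset.range N, σ (n - l)) :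
    (PowerSeries.mk fun k =>
        if k = 0 ∨ k = N + 1 then (1 : ℤ) else if k ≤ N then -((p : ℤ) - 2) else 0) *
      (PowerSeries.mk fun n => σ n) =
    (PowerSeries.mk fun k =>
        if k = 0 ∨ k = N + 1 then (1 : ℤ) else if k ≤ N then 2 else 0) := by
  have hN1 : 1 ≤ N := by
    obtain ⟨t, rfl⟩ := hqe
    omega
  exact palindromicSeries_mul_mk_of_rec hN1 hσ0 (by rw [hσ1]; ring) hrec1 (hrec2 hN1) hrec3

/-- for `q` even, `N = (q-2)/2`, the sphere-cardinality sequence of the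
`(p,q)`-regular tessellation (defined by the growth recursion of the paper's Theorem 2 with
all coefficients equal to `p - 2`) has growth series satisfying
`g_{p,q}(z)·(Σ σ_n z^n) = h_{p,q}(z)` in `ℤ[[z]]`, where
`g_{p,q} = 1 - (p-2)(z + ⋯ + z^N) + z^(N+1)` and `h_{p,q} = 1 + 2z + ⋯ + 2z^N + z^(N+1)`. -/
theorem growth_series_even (p q : ℕ) (hp : 3 ≤ p) (hq : 3 ≤ q) (hqe : Even q)
    (hpq : (1 : ℝ) / p + 1 / q ≤ 1 / 2)
    (N : ℕ) (hN : N = (q - 2) / 2)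
    (σ : ℕ → ℤ) (hσ0 : σ 0 = 1) (hσ1 : σ 1 = p)
    (hrec1 : ∀ n, 1 ≤ n → n < N →
      σ (n + 1) = σ 1 + ((p : ℤ) - 2) * ∑ l ∈ Finset.range n, σ (n - l))
    (hrec2 : 1 ≤ N → σ (N + 1) = ((p : ℤ) - 2) * ∑ l ∈ Finset.range N, σ (N - l))
    (hrec3 : ∀ n, N < n →
      σ (n + 1) = -σ (n - N) + ((p : ℤ) - 2) * ∑ l ∈ Finset.range N, σ (n - l)) :
    (PowerSeries.mk fun k =>
        if k = 0 ∨ k = N + 1 then (1 : ℤ) else if k ≤ N then -((p : ℤ) - 2) else 0) *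
      (PowerSeries.mk fun n => σ n) =
    (PowerSeries.mk fun k =>
        if k = 0 ∨ k = N + 1 then (1 : ℤ) else if k ≤ N then 2 else 0) :=
  growth_series_even_general p q hq hqe N hN σ hσ0 hσ1 hrec1 hrec2 hrec3
end

section
/- Let p, q be integers with p, q ≥ 3, q odd, and 1/p + 1/q ≤ 1/2, and set N = q−2. Define coefficients β_l for 0 ≤ l ≤ N−1 by β_l = p−2 for l ≠ (N−1)/2 and β_{(N−1)/2} = p−4. Define σ : ℕ → ℤ by σ_0 = 1, σ_1 = p, and for n ≥ 1: σ_{n+1} = σ_1 + Σ_{l=0}^{n−1} β_l·σ_{n−l} if n < N; σ_{N+1} = Σ_{l=0}^{N−1} β_l·σ_{N−l}; σ_{n+1} = −σ_{n−N} + Σ_{l=0}^{N−1} β_l·σ_{n−l} if n > N. Then in ℤ[[z]], g_{p,q}(z)·(Σ_{n=0}^∞ σ_n z^n) = h_{p,q}(z), where g_{p,q}(z) = 1 − (p−2)z − ⋯ − (p−4)z^{(N+1)/2} − ⋯ − (p−2)z^N + z^{N+1} (coefficient −(p−2) for z^l, 1 ≤ l ≤ N, l ≠ (N+1)/2, and −(p−4)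 for z^{(N+1)/2}) and h_{p,q}(z) = 1 + 2z + ⋯ + 4z^{(N+1)/2} + ⋯ + 2z^N + z^{N+1} (coefficient 2 for z^l, 1 ≤ l ≤ N, l ≠ (N+1)/2, and 4 for z^{(N+1)/2}). -/
/-!
Write `g = 1 - ∑_{l<N} β_l z^{l+1} + z^{N+1}`. The coefficient of `z^{n+1}` in `g · ∑ σ_n z^n` is
`σ_{n+1} - ∑_{l ≤ min(n, N-1)} β_l σ_{n-l}`, plus `σ_{n-N}` once `n ≥ N`. The three branches of the
recursion evaluate this to `σ_1 - β_n = p - β_n ∈ {2, 4}` for `n < N`, to `σ_0 = 1` for `n = N`,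
and to `0` for `n > N`. The middle coefficient of `g` and `h` sits at `(N+1)/2 = (N-1)/2 + 1`,
matching the exceptional `β_{(N-1)/2}` after the shift `z^{l+1}`.
-/

open Finset

namespace PowerSeries

variable {R : Type*} [CommRing R]

noncomputable def recurrenceDenom (β : ℕ → R) (N : ℕ) : R⟦X⟧ :=
  1 - ∑ l ∈ range N, C (β l) * X ^ (l + 1) + X ^ (N + 1)

theorem recurrenceDenom_eq_mk (β : ℕ → R) (N : ℕ) :
    recurrenceDenom β N =
      mk fun k => if k = 0 ∨ k = N + 1 then 1 else if k ≤ N then -β (k - 1) else 0 := by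
  ext (_ | k)
  · simp [recurrenceDenom]
  · simp only [recurrenceDenom, map_add, map_sub, map_sum, coeff_C_mul_X_pow, coeff_X_pow,
      coeff_one, coeff_mk]
    split_ifs <;> simp_all

variable (β σ : ℕ → R) {N : ℕ}

theorem coeff_zero_recurrenceDenom_mul : coeff 0 (recurrenceDenom β N * mk σ) = σ 0 := by
  simp [recurrenceDenom, coeff_zero_eq_constantCoeff_apply]

theorem coeff_succ_recurrenceDenom_mul (n : ℕ) :
    coeff (n + 1) (recurrenceDenom β N * mk σ) =
      σ (n + 1) - ∑ l ∈ range N, (if l ≤ n then β l * σ (n - l) else 0)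
        + if N ≤ n then σ (n - N) else 0 := by
  simp [recurrenceDenom, sub_mul, add_mul, sum_mul, mul_assoc, coeff_X_pow_mul']

theorem coeff_succ_recurrenceDenom_mul_of_lt {n : ℕ} (hn : n < N) :
    coeff (n + 1) (recurrenceDenom β N * mk σ) =
      σ (n + 1) - ∑ l ∈ range (n + 1), β l * σ (n - l) := by
  have hrange : {l ∈ range N | l ≤ n} = range (n + 1) := by
    ext l; simp only [mem_filter, mem_range]; omega
  rw [coeff_succ_recurrenceDenom_mul, ← sum_filter, hrange, if_neg (by omega), add_zero]

theorem coeff_succ_recurrenceDenom_mul_of_le {n : ℕ} (hn : N ≤ n) :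
    coeff (n + 1) (recurrenceDenom β N * mk σ) =
      σ (n + 1) - ∑ l ∈ range N, β l * σ (n - l) + σ (n - N) := by
  have hsum : ∀ l ∈ range N, (if l ≤ n then β l * σ (n - l) else 0) = β l * σ (n - l) :=
    fun l hl => if_pos ((mem_range.mp hl).le.trans hn)
  rw [coeff_succ_recurrenceDenom_mul, sum_congr rfl hsum, if_pos hn]

end PowerSeries

open PowerSeries

theorem growth_series_odd_general (p q : ℕ) (hq : 3 ≤ q)
    (N : ℕ) (hN : N = q - 2)
    (β : ℕ → ℤ)
    (hβ : ∀ l, l ≤ N - 1 →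
      β l = if l = (N - 1) / 2 then (p : ℤ) - 4 else (p : ℤ) - 2)
    (σ : ℕ → ℤ) (hσ0 : σ 0 = 1) (hσ1 : σ 1 = p)
    (hrec1 : ∀ n, 1 ≤ n → n < N →
      σ (n + 1) = σ 1 + ∑ l ∈ Finset.range n, β l * σ (n - l))
    (hrec2 : 1 ≤ N → σ (N + 1) = ∑ l ∈ Finset.range N, β l * σ (N - l))
    (hrec3 : ∀ n, N < n →
      σ (n + 1) = -σ (n - N) + ∑ l ∈ Finset.range N, β l * σ (n - l)) :
    (PowerSeries.mk fun k =>
        if k = 0 ∨ k = N + 1 then (1 : ℤ)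
        else if k ≤ N then (if k = (N + 1) / 2 then -((p : ℤ) - 4) else -((p : ℤ) - 2))
        else 0) *
      (PowerSeries.mk fun n => σ n) =
    (PowerSeries.mk fun k =>
        if k = 0 ∨ k = N + 1 then (1 : ℤ)
        else if k ≤ N then (if k = (N + 1) / 2 then 4 else 2)
        else 0) := by
  have hN1 : 1 ≤ N := by omega
  convert_to recurrenceDenom β N * mk σ = _ using 2
  · rw [recurrenceDenom_eq_mk]
    congr 1; funext k
    split_ifs <;> try rfl
    · rw [hβ (k - 1) (by omega), if_pos (by omega)]
    · rw [hβ (k - 1) (by omega), if_neg (by omega)]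
  ext (_ | n)
  · simp [coeff_zero_recurrenceDenom_mul, hσ0]
  rw [coeff_mk]
  rcases lt_trichotomy n N with hn | rfl | hn
  · have hinit : σ (n + 1) - ∑ l ∈ range n, β l * σ (n - l) = p := by
      rcases Nat.eq_zero_or_pos n with rfl | hpos
      · simp [hσ1]
      · rw [hrec1 n hpos hn, hσ1, add_sub_cancel_right]
    rw [coeff_succ_recurrenceDenom_mul_of_lt β σ hn, sum_range_succ, Nat.sub_self, hσ0, mul_one,
      sub_add_eq_sub_sub, hinit, if_neg (show ¬(n + 1 = 0 ∨ n + 1 = N + 1) by omega),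
      if_pos (show n + 1 ≤ N from hn), hβ n (by omega)]
    split_ifs <;> omega
  · rw [coeff_succ_recurrenceDenom_mul_of_le β σ le_rfl, hrec2 hN1, Nat.sub_self, hσ0]
    simp
  · rw [coeff_succ_recurrenceDenom_mul_of_le β σ hn.le, hrec3 n hn, if_neg (by omega),
      if_neg (by omega)]
    ring

/-- for `q` odd, `N = q-2`, the sphere-cardinality sequence of the
`(p,q)`-regular tessellation (defined by the growth recursion of the paper's Theorem 2 with
coefficients `β l = p-2` except `β ((N-1)/2) = p-4`) has growth series satisfying
`g_{p,q}(z)·(Σ σ_n z^n) = h_{p,q}(z)` in `ℤ[[z]]`, where the coefficient of `z^l` in `g_{p,q}`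
is `1` for `l ∈ {0, N+1}`, `-(p-2)` for `1 ≤ l ≤ N`, `l ≠ (N+1)/2`, and `-(p-4)` for
`l = (N+1)/2`; and in `h_{p,q}` it is `1` for `l ∈ {0, N+1}`, `2` for `1 ≤ l ≤ N`,
`l ≠ (N+1)/2`, and `4` for `l = (N+1)/2`. -/
theorem growth_series_odd (p q : ℕ) (hp : 3 ≤ p) (hq : 3 ≤ q) (hqo : ¬ Even q)
    (hpq : (1 : ℝ) / p + 1 / q ≤ 1 / 2)
    (N : ℕ) (hN : N = q - 2)
    (β : ℕ → ℤ)
    (hβ : ∀ l, l ≤ N - 1 →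
      β l = if l = (N - 1) / 2 then (p : ℤ) - 4 else (p : ℤ) - 2)
    (σ : ℕ → ℤ) (hσ0 : σ 0 = 1) (hσ1 : σ 1 = p)
    (hrec1 : ∀ n, 1 ≤ n → n < N →
      σ (n + 1) = σ 1 + ∑ l ∈ Finset.range n, β l * σ (n - l))
    (hrec2 : 1 ≤ N → σ (N + 1) = ∑ l ∈ Finset.range N, β l * σ (N - l))
    (hrec3 : ∀ n, N < n →
      σ (n + 1) = -σ (n - N) + ∑ l ∈ Finset.range N, β l * σ (n - l)) :
    (PowerSeries.mk fun k =>
        if k = 0 ∨ k = N + 1 then (1 : ℤ)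
        else if k ≤ N then (if k = (N + 1) / 2 then -((p : ℤ) - 4) else -((p : ℤ) - 2))
        else 0) *
      (PowerSeries.mk fun n => σ n) =
    (PowerSeries.mk fun k =>
        if k = 0 ∨ k = N + 1 then (1 : ℤ)
        else if k ≤ N then (if k = (N + 1) / 2 then 4 else 2)
        else 0) :=
  growth_series_odd_general p q hq N hN β hβ σ hσ0 hσ1 hrec1 hrec2 hrec3
end

section
/- Let p, q ≥ 3 be integers with 1/p + 1/q ≤ 1/2, and set C = p·(1/2 − 1/p − 1/q) = p/2 − 1 − p/q ≥ 0. Let g_{p,q} be the polynomial defined by: for q even with N = (q−2)/2, g_{p,q}(z) = 1 − (p−2)(z + z² + ⋯ + z^N) + z^{N+1}; for q odd with N = q−2, the same except that the coefficient of z^{(N+1)/2} is −(p−4). Then g_{p,q} has a real root x satisfying x ≥ 1 + (2q/(q−1))·C. -/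
/-!
Put `a = p - 2`, `t = (p + 2) / (q - 1)` and `b = a + 1 - t`; then `b = 1 + 2qC/(q - 1)`, and
the curvature hypothesis says `t ≤ a`, i.e. `b ≥ 1`. As `g z → ∞`, the intermediate value
theorem reduces the claim to `g b ≤ 0`. Multiplying by `b - 1` telescopes the geometric sum:
`(b - 1) g(b) = (a + 1) b - 1 - t b^(N+1)`, plus `2 (b - 1) b^m` when `q = 2m + 1`. Bernoulli's
inequality `b^m ≥ 1 + m (b - 1)` then bounds this by `-(b - 1)^2 (b + 2) / 2` for even `q` and
by `-a m (b - 1)^2 / 2` for odd `q`. In the flat case `b = 1` one checks `g 1 = 0` directly.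
-/

open Finset Filter Asymptotics

theorem exists_eq_zero_ge_of_tendsto_atTop {g : ℝ → ℝ} {b : ℝ} (hg : Continuous g)
    (htop : Tendsto g atTop atTop) (hb : g b ≤ 0) : ∃ x, g x = 0 ∧ b ≤ x := by
  obtain ⟨x, hx, hgx⟩ := intermediate_value_Ici hg.continuousOn htop (Set.mem_Ici.2 hb)
  exact ⟨x, hgx, hx⟩

theorem tendsto_one_sub_sum_add_pow_atTop (c : ℕ → ℝ) (N : ℕ) :
    Tendsto (fun z : ℝ ↦ 1 - ∑ l ∈ Icc 1 N, c l * z ^ l + z ^ (N + 1)) atTop atTop := by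
  have hpow : Tendsto (fun z : ℝ ↦ z ^ (N + 1)) atTop atTop := tendsto_pow_atTop N.succ_ne_zero
  have hlow : (fun z : ℝ ↦ 1 - ∑ l ∈ Icc 1 N, c l * z ^ l) =o[atTop] (· ^ (N + 1)) := by
    refine IsLittleO.sub ?_ (IsLittleO.fun_sum fun l hl ↦ ?_)
    · exact isLittleO_const_left.2 (Or.inr (tendsto_norm_atTop_atTop.comp hpow))
    · exact (isLittleO_pow_pow_atTop_of_lt (Nat.lt_succ_of_le (mem_Icc.1 hl).2)).const_mul_left _
  exact (hlow.add_isEquivalent IsEquivalent.refl).symm.tendsto_atTop hpow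

theorem sub_one_mul_one_sub_sum_add_pow (a z : ℝ) (N : ℕ) :
    (z - 1) * (1 - ∑ l ∈ Icc 1 N, a * z ^ l + z ^ (N + 1)) =
      (a + 1) * z - 1 - (a + 1 - z) * z ^ (N + 1) := by
  have hgeom := geom_sum_Ico_mul z (Nat.le_add_left 1 N)
  rw [Finset.Ico_add_one_right_eq_Icc] at hgeom
  rw [← mul_sum]
  linear_combination (-a) * hgeom

theorem one_sub_sum_add_pow_nonpos {a t b : ℝ} {N : ℕ} (ht : t * (2 * N + 1) = a + 4)
    (hb : b + t = a + 1) (hta : t ≤ a) :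
    1 - ∑ l ∈ Icc 1 N, a * b ^ l + b ^ (N + 1) ≤ 0 := by
  obtain heq | hlt := hta.eq_or_lt
  · obtain rfl : b = 1 := by linarith
    simp only [one_pow, mul_one, sum_const, Nat.card_Icc, nsmul_eq_mul]
    push_cast
    subst heq
    nlinarith
  · have hs : 0 < b - 1 := by linarith
    have ht0 : 0 < t := by nlinarith
    have hbern : b * (1 + N * (b - 1)) ≤ b ^ (N + 1) := by
      rw [pow_succ']
      have := one_add_mul_le_pow (by linarith : (-2 : ℝ) ≤ b - 1) N
      rw [add_sub_cancel] at this
      exact mul_le_mul_of_nonneg_left this (by linarith)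
    have hid : t * (b * (1 + N * (b - 1))) - ((a + 1) * b - 1) = (b - 1) ^ 2 * (b + 2) / 2 := by
      have : a = b + t - 1 := by linarith
      subst this
      linear_combination (b - 1) * b * ht / 2
    have key := sub_one_mul_one_sub_sum_add_pow a b N
    have : (b - 1) * (1 - ∑ l ∈ Icc 1 N, a * b ^ l + b ^ (N + 1)) ≤ 0 := by
      rw [key, show a + 1 - b = t by linarith]
      nlinarith
    exact nonpos_of_mul_nonpos_right this hs

theorem one_sub_sum_ite_add_pow_nonpos {a t b : ℝ} {N m : ℕ} (hN : N + 1 = 2 * m)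
    (ht : t * (2 * m) = a + 4) (hb : b + t = a + 1) (hta : t ≤ a) :
    1 - ∑ l ∈ Icc 1 N, (if l = m then a - 2 else a) * b ^ l + b ^ (N + 1) ≤ 0 := by
  have hm : m ∈ Icc 1 N := by
    have : m ≠ 0 := by rintro rfl; simp only [Nat.cast_zero, mul_zero] at ht; linarith
    simp only [mem_Icc]; omega
  have hNR : (N : ℝ) + 1 = 2 * m := by exact_mod_cast hN
  have hsum : ∑ l ∈ Icc 1 N, (if l = m then a - 2 else a) * b ^ l =
      ∑ l ∈ Icc 1 N, a * b ^ l - 2 * b ^ m := by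
    have hterm : ∀ l ∈ Icc 1 N, (if l = m then a - 2 else a) * b ^ l =
        a * b ^ l - if l = m then 2 * b ^ l else 0 := fun l _ ↦ by split_ifs <;> ring
    rw [sum_congr rfl hterm, sum_sub_distrib, sum_ite_eq', if_pos hm]
  rw [hsum]
  obtain heq | hlt := hta.eq_or_lt
  · obtain rfl : b = 1 := by linarith
    simp only [one_pow, mul_one, sum_const, Nat.card_Icc, nsmul_eq_mul]
    push_cast
    subst heq
    linear_combination -(t * hNR + ht)
  · have hs : 0 < b - 1 := by linarith
    have ht0 : 0 < t := by nlinarith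
    have hbern : 1 + m * (b - 1) ≤ b ^ m := by
      simpa using one_add_mul_le_pow (by linarith : (-2 : ℝ) ≤ b - 1) m
    have hid : t * (1 + m * (b - 1)) ^ 2 - 2 * (b - 1) * (1 + m * (b - 1)) - ((a + 1) * b - 1) =
        a * m * (b - 1) ^ 2 / 2 := by
      have : a = b + t - 1 := by linarith
      subst this
      linear_combination ((b - 1) + m * (b - 1) ^ 2 / 2) * ht
    have hmono : t * (1 + m * (b - 1)) ^ 2 - 2 * (b - 1) * (1 + m * (b - 1)) ≤
        t * (b ^ m) ^ 2 - 2 * (b - 1) * b ^ m := by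
      -- `t u^2 - 2 (b - 1) u` is increasing for `t u ≥ b - 1`
      have htv : b - 1 ≤ t * (1 + m * (b - 1)) := by nlinarith
      have := mul_nonneg (sub_nonneg.2 hbern) (add_nonneg
        (mul_nonneg ht0.le (sub_nonneg.2 hbern)) (mul_nonneg zero_le_two (sub_nonneg.2 htv)))
      linear_combination this
    have hg : (b - 1) * (1 - (∑ l ∈ Icc 1 N, a * b ^ l - 2 * b ^ m) + b ^ (N + 1)) =
        (a + 1) * b - 1 - (t * (b ^ m) ^ 2 - 2 * (b - 1) * b ^ m) := by
      have key := sub_one_mul_one_sub_sum_add_pow a b N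
      rw [hN, pow_mul'] at key ⊢
      linear_combination key + (b ^ m) ^ 2 * hb
    have ha : 0 ≤ a * m * (b - 1) ^ 2 / 2 := by
      have : 0 ≤ a := by linarith
      positivity
    refine nonpos_of_mul_nonpos_right ?_ hs
    rw [hg]
    linarith

theorem growth_denominator_nonpos {a t b : ℝ} {q N : ℕ} (hq : 2 ≤ q)
    (hN : N = if Even q then (q - 2) / 2 else q - 2)
    (ht : t * ((q : ℝ) - 1) = a + 4) (hb : b + t = a + 1) (hta : t ≤ a) :
    1 - ∑ l ∈ Icc 1 N, (if ¬ Even q ∧ 2 * l = N + 1 then a - 2 else a) * b ^ l + b ^ (N + 1)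
      ≤ 0 := by
  rcases Nat.even_or_odd' q with ⟨k, rfl | rfl⟩
  · obtain rfl : k = N + 1 := by simp only [even_two_mul, if_true] at hN; omega
    simp only [even_two_mul, not_true_eq_false, false_and, if_false]
    exact one_sub_sum_add_pow_nonpos (by push_cast at ht; linear_combination ht) hb hta
  · have hNk : N + 1 = 2 * k := by simp only [Nat.not_even_two_mul_add_one, if_false] at hN; omega
    have hcoef : ∀ l, (¬ Even (2 * k + 1) ∧ 2 * l = N + 1) ↔ l = k := fun l ↦ by
      simp only [Nat.not_even_two_mul_add_one, not_false_eq_true, true_and]; omega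
    simp only [hcoef]
    exact one_sub_sum_ite_add_pow_nonpos hNk (by push_cast at ht; linear_combination ht) hb hta

theorem div_le_sub_two_of_inv_add_inv_le_half {p q : ℝ} (hp : 0 < p) (hq : 1 < q)
    (hpq : 1 / p + 1 / q ≤ 1 / 2) : (p + 2) / (q - 1) ≤ p - 2 := by
  rw [div_add_div _ _ hp.ne' (by linarith), div_le_div_iff₀ (by positivity) two_pos] at hpq
  rw [div_le_iff₀ (by linarith)]
  nlinarith

/-- the paper's Proposition 2: the denominator polynomial `g_{p,q}` of the
growth function of the non-positively curved `(p,q)`-regular tessellation has a real root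
`x ≥ 1 + (2q/(q-1))·C`, where `C = p·(1/2 - 1/p - 1/q)`.  Here `N = (q-2)/2` for `q` even and
`N = q-2` for `q` odd, and the coefficient of `z^l` (`1 ≤ l ≤ N`) in `g_{p,q}` is `-(p-2)`
except `-(p-4)` at `l = (N+1)/2` when `q` is odd. -/
theorem exists_root_ge_curvature_bound (p q : ℕ) (hp : 3 ≤ p) (hq : 3 ≤ q)
    (hpq : (1 : ℝ) / p + 1 / q ≤ 1 / 2)
    (C : ℝ) (hC : C = (p : ℝ) / 2 - 1 - (p : ℝ) / (q : ℝ))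
    (N : ℕ) (hN : N = if Even q then (q - 2) / 2 else q - 2)
    (g : ℝ → ℝ)
    (hg : ∀ z, g z = 1 -
        (∑ l ∈ Finset.Icc 1 N,
          (if ¬ Even q ∧ 2 * l = N + 1 then (p : ℝ) - 4 else (p : ℝ) - 2) * z ^ l)
        + z ^ (N + 1)) :
    ∃ x : ℝ, g x = 0 ∧ 1 + (2 * (q : ℝ) / ((q : ℝ) - 1)) * C ≤ x := by
  have hp0 : (0 : ℝ) < p := by positivity
  have hq1 : (1 : ℝ) < q := by exact_mod_cast (by omega : 1 < q)
  set t : ℝ := ((p : ℝ) + 2) / ((q : ℝ) - 1) with ht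
  have htq : t * ((q : ℝ) - 1) = (p : ℝ) - 2 + 4 := by
    rw [ht, div_mul_cancel₀ _ (by linarith)]; ring
  have hbt : 1 + 2 * (q : ℝ) / ((q : ℝ) - 1) * C + t = (p : ℝ) - 2 + 1 := by
    have : (q : ℝ) - 1 ≠ 0 := by linarith
    rw [hC, ht]; field_simp; ring
  have hcoef : (p : ℝ) - 4 = (p : ℝ) - 2 - 2 := by ring
  rw [funext hg]
  refine exists_eq_zero_ge_of_tendsto_atTop (by fun_prop) (tendsto_one_sub_sum_add_pow_atTop _ N) ?_
  simp only [hcoef]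
  exact growth_denominator_nonpos (by omega) hN htq hbt
    (div_le_sub_two_of_inv_add_inv_le_half hp0 hq1 hpq)
end

section
/- Let p, q be real numbers with p, q ≥ 3 and 1/p + 1/q ≤ 1/2, let d be a real number with 3 ≤ d ≤ p, and let C be a real number with C ≤ ((q−2)/(2q))·d − 1. Then 2·C_{p,q}·C ≤ d, where C_{p,q} = q(p−2)/((p−2)(q−2) − 2). -/
/-!
Since `C_{p,q} ≥ 0`, it suffices to take `C = ((q-2)/(2q))·d - 1`, and for that value
`2·C_{p,q}·C = d - 2(q(p-2) - d)/((p-2)(q-2) - 2)`. The condition `1/p + 1/q ≤ 1/2` means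
`2(p+q) ≤ pq`, which makes the denominator positive and gives `d ≤ p ≤ q(p-2)`.
-/

noncomputable def cpq (p q : ℝ) : ℝ := q * (p - 2) / ((p - 2) * (q - 2) - 2)

lemma two_mul_add_le_mul_of_inv_add_inv_le_half {p q : ℝ} (hp : 0 < p) (hq : 0 < q)
    (h : 1 / p + 1 / q ≤ 1 / 2) : 2 * (p + q) ≤ p * q := by
  rw [div_add_div _ _ hp.ne' hq.ne', div_le_div_iff₀ (by positivity) two_pos] at h
  linarith

lemma cpq_denom_pos {p q : ℝ} (h : 2 * (p + q) ≤ p * q) : 0 < (p - 2) * (q - 2) - 2 := by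
  nlinarith

lemma cpq_nonneg {p q : ℝ} (hp : 2 ≤ p) (hq : 0 ≤ q) (hD : 0 ≤ (p - 2) * (q - 2) - 2) :
    0 ≤ cpq p q :=
  div_nonneg (mul_nonneg hq (sub_nonneg.mpr hp)) hD

lemma two_mul_cpq_mul_eq {p q : ℝ} (d : ℝ) (hq : q ≠ 0) (hD : (p - 2) * (q - 2) - 2 ≠ 0) :
    2 * cpq p q * ((q - 2) / (2 * q) * d - 1) =
      d - 2 * (q * (p - 2) - d) / ((p - 2) * (q - 2) - 2) := by
  unfold cpq
  field_simp
  ring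

theorem two_Cpq_C_le_degree_general (p q d C : ℝ) (hp : 3 ≤ p) (hq : 3 ≤ q)
    (hpq : 1 / p + 1 / q ≤ 1 / 2) (hdp : d ≤ p)
    (hC : C ≤ ((q - 2) / (2 * q)) * d - 1) :
    2 * (q * (p - 2) / ((p - 2) * (q - 2) - 2)) * C ≤ d := by
  show 2 * cpq p q * C ≤ d
  have hpq' := two_mul_add_le_mul_of_inv_add_inv_le_half (by linarith) (by linarith) hpq
  have hD := cpq_denom_pos hpq'
  have hdq : d ≤ q * (p - 2) := by linarith
  calc 2 * cpq p q * C
      ≤ 2 * cpq p q * ((q - 2) / (2 * q) * d - 1) :=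
        mul_le_mul_of_nonneg_left hC
          (mul_nonneg two_pos.le (cpq_nonneg (by linarith) (by linarith) hD.le))
    _ = d - 2 * (q * (p - 2) - d) / ((p - 2) * (q - 2) - 2) :=
        two_mul_cpq_mul_eq d (by linarith : (0 : ℝ) < q).ne' hD.ne'
    _ ≤ d := sub_le_self _ (div_nonneg (by linarith) hD.le)

/-- the arithmetic core of the paper's Lemma 2.3: for real `p, q ≥ 3` with
`1/p + 1/q ≤ 1/2`, a degree `3 ≤ d ≤ p` and any `C ≤ ((q-2)/(2q))·d - 1` satisfy
`2·C_{p,q}·C ≤ d`, where `C_{p,q} = q(p-2)/((p-2)(q-2) - 2)`. -/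
theorem two_Cpq_C_le_degree (p q d C : ℝ) (hp : 3 ≤ p) (hq : 3 ≤ q)
    (hpq : 1 / p + 1 / q ≤ 1 / 2) (hd3 : 3 ≤ d) (hdp : d ≤ p)
    (hC : C ≤ ((q - 2) / (2 * q)) * d - 1) :
    2 * (q * (p - 2) / ((p - 2) * (q - 2) - 2)) * C ≤ d :=
  two_Cpq_C_le_degree_general p q d C hp hq hpq hdp hC
end
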